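/- Soundness and completeness of the Logic of Approximate Entailment on Products of Chains: for any theory T and any formula Φ of LAEPC, T proves Φ in the proof system of LAEPC if and only if T semantically entails Φ, i.e. every evaluation in every component-wise ordered similarity space that satisfies all members of T also satisfies Φ. -/

import Mathlib

/-- A finite t-norm: a finite subset `V` of the real unit interval containing `0` and `1`,
equipped with an associative, commutative, monotone operation with neutral element `1`. -/
structure FiniteTNorm where
  V : Set ℝ
  finite : V.Finite
  subset : V ⊆ Set.Icc (0 : ℝ) 1
  zero_mem : (0 : ℝ) ∈ V
  one_mem : (1 : ℝ) ∈ V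
  op : V → V → V
  op_assoc : ∀ a b c, op (op a b) c = op a (op b c)
  op_comm : ∀ a b, op a b = op b a
  op_one : ∀ a, op a ⟨1, one_mem⟩ = a
  op_mono : ∀ a b c d : V, (a : ℝ) ≤ (b : ℝ) → (c : ℝ) ≤ (d : ℝ) → (op a c : ℝ) ≤ (op b d : ℝ)

def FiniteTNorm.one (T : FiniteTNorm) : T.V := ⟨1, T.one_mem⟩

def FiniteTNorm.zero (T : FiniteTNorm) : T.V := ⟨0, T.zero_mem⟩

/-- A finite similarity space based on the finite t-norm `T`. -/
structure SimilaritySpace (T : FiniteTNorm) (W : Type) [Fintype W] [Nonempty W] where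
  S : W → W → T.V
  eq_one_iff : ∀ u v, S u v = T.one ↔ u = v
  symm : ∀ u v, S u v = S v u
  triangle : ∀ u v w, (T.op (S u v) (S v w) : ℝ) ≤ (S u w : ℝ)

/-- The `c`-neighbourhood `U_c(A)` of a set `A` of worlds. -/
def SimilaritySpace.nbhd {T : FiniteTNorm} {W : Type} [Fintype W] [Nonempty W]
    (sp : SimilaritySpace T W) (c : T.V) (A : Set W) : Set W :=
  {w | ∃ a ∈ A, (c : ℝ) ≤ (sp.S w a : ℝ)}

/-- A totally ordered similarity space: a finite similarity space together with a total
order compatible with the similarity. -/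
structure TOSimilaritySpace (T : FiniteTNorm) (W : Type) [Fintype W] [Nonempty W]
    [LinearOrder W] extends SimilaritySpace T W where
  compat : ∀ u v w : W, u ≤ v → v ≤ w → (S u w : ℝ) ≤ min (S u v : ℝ) (S v w : ℝ)

/-- The downward closure `◇≤ A`. -/
def dcl {W : Type} [LinearOrder W] (A : Set W) : Set W := {v | ∃ w ∈ A, v ≤ w}

/-- The upward closure `◇≥ A`. -/
def ucl {W : Type} [LinearOrder W] (A : Set W) : Set W := {v | ∃ w ∈ A, w ≤ v}

/-- The similarity on the product `W = ∏ i, W i` of totally ordered similarity spaces: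
`S(v,w) = min_i S_i(v_i, w_i)`. -/
noncomputable def prodS {T : FiniteTNorm} {M : ℕ} {W : Fin M → Type}
    [∀ i, Fintype (W i)] [∀ i, Nonempty (W i)] [∀ i, LinearOrder (W i)]
    (hM : 0 < M) (sps : ∀ i, TOSimilaritySpace T (W i))
    (v w : ∀ i, W i) : T.V :=
  haveI : Nonempty (Fin M) := ⟨⟨0, hM⟩⟩
  Finset.univ.inf' Finset.univ_nonempty fun i => (sps i).S (v i) (w i)

/-- The `c`-neighbourhood in a component-wise ordered similarity space. -/
def pNbhd {T : FiniteTNorm} {M : ℕ} {W : Fin M → Type}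
    [∀ i, Fintype (W i)] [∀ i, Nonempty (W i)] [∀ i, LinearOrder (W i)]
    (hM : 0 < M) (sps : ∀ i, TOSimilaritySpace T (W i))
    (c : T.V) (A : Set (∀ i, W i)) : Set (∀ i, W i) :=
  {w | ∃ a ∈ A, (c : ℝ) ≤ (prodS hM sps w a : ℝ)}

/-- `◇≤A` in a component-wise ordered similarity space. -/
def pDcl {M : ℕ} {W : Fin M → Type} [∀ i, LinearOrder (W i)]
    (A : Set (∀ i, W i)) : Set (∀ i, W i) :=
  {w | ∀ i, ∃ v ∈ A, w i ≤ v i}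

/-- `◇≥A` in a component-wise ordered similarity space. -/
def pUcl {M : ℕ} {W : Fin M → Type} [∀ i, LinearOrder (W i)]
    (A : Set (∀ i, W i)) : Set (∀ i, W i) :=
  {w | ∀ i, ∃ v ∈ A, v i ≤ w i}

/-- The cylindrical extension `πC` of a subset `C` of the `i`-th component. -/
def cyl {M : ℕ} {W : Fin M → Type} (i : Fin M) (C : Set (W i)) : Set (∀ j, W j) :=
  {w | w i ∈ C}

/-- The cylindrical extension `πA` of a subset `A` of the partial product over the
block of coordinates `I`. -/
def cylOn {M : ℕ} {W : Fin M → Type} (I : Finset (Fin M))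
    (A : Set (∀ i : {x // x ∈ I}, W i.1)) : Set (∀ i, W i) :=
  {w | (fun i : {x // x ∈ I} => w i.1) ∈ A}

/-! ## Syntax of the Logic of Approximate Entailment on Products of Chains `LAEPC` -/

/-- Basic expressions of `LAEPC`: for each sort `i : Fin M` there are `N i` sorted
variables, there are `K` unsorted variables, and expressions are built using the Boolean
operations and the two modal operators `◇≤` (`dle`) and `◇≥` (`dge`). -/
inductive PExp (M : ℕ) (N : Fin M → ℕ) (K : ℕ) : Type
  | svar (i : Fin M) (j : Fin (N i))
  | uvar (k : Fin K)
  | bot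
  | top
  | and (φ ψ : PExp M N K)
  | or (φ ψ : PExp M N K)
  | not (φ : PExp M N K)
  | dle (φ : PExp M N K)
  | dge (φ : PExp M N K)

/-- `φ.usesSort i` holds iff some variable of sort `i` occurs in `φ`. -/
def PExp.usesSort {M : ℕ} {N : Fin M → ℕ} {K : ℕ} (i : Fin M) : PExp M N K → Prop
  | .svar i' _ => i' = i
  | .uvar _ => False
  | .bot => False
  | .top => False
  | .and φ ψ => φ.usesSort i ∨ ψ.usesSort i
  | .or φ ψ => φ.usesSort i ∨ ψ.usesSort i
  | .not φ => φ.usesSort i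
  | .dle φ => φ.usesSort i
  | .dge φ => φ.usesSort i

/-- `φ.usesUnsorted` holds iff some unsorted variable occurs in `φ`. -/
def PExp.usesUnsorted {M : ℕ} {N : Fin M → ℕ} {K : ℕ} : PExp M N K → Prop
  | .svar _ _ => False
  | .uvar _ => True
  | .bot => False
  | .top => False
  | .and φ ψ => φ.usesUnsorted ∨ ψ.usesUnsorted
  | .or φ ψ => φ.usesUnsorted ∨ ψ.usesUnsorted
  | .not φ => φ.usesUnsorted
  | .dle φ => φ.usesUnsorted
  | .dge φ => φ.usesUnsorted

/-- `φ` belongs to sort `i` (is one-sorted of sort `i`): all its variables are sorted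
variables of sort `i`. -/
def BelongsTo {M : ℕ} {N : Fin M → ℕ} {K : ℕ} (i : Fin M) (φ : PExp M N K) : Prop :=
  ¬φ.usesUnsorted ∧ ∀ i', φ.usesSort i' → i' = i

/-- `φ` and `ψ` are disjoint-sorted: all their variables are sorted and no sort occurs in
both. -/
def DisjointSorted {M : ℕ} {N : Fin M → ℕ} {K : ℕ} (φ ψ : PExp M N K) : Prop :=
  ¬φ.usesUnsorted ∧ ¬ψ.usesUnsorted ∧ ∀ i, ¬(φ.usesSort i ∧ ψ.usesSort i)

/-- The literal on the sorted variable `p`, positive or negated according to `b`. -/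
def PExp.sliteral {M : ℕ} {N : Fin M → ℕ} {K : ℕ}
    (p : (i : Fin M) × Fin (N i)) (b : Bool) : PExp M N K :=
  if b then PExp.svar p.1 p.2 else PExp.not (PExp.svar p.1 p.2)

/-- The conjunction of a list of basic expressions. -/
def conjListP {M : ℕ} {N : Fin M → ℕ} {K : ℕ} : List (PExp M N K) → PExp M N K
  | [] => PExp.top
  | [φ] => φ
  | φ :: χ :: rest => PExp.and φ (conjListP (χ :: rest))

/-- A m.e.c.: a conjunction of literals in which each sorted variable occurs exactly
once. -/
def IsMecP {M : ℕ} {N : Fin M → ℕ} {K : ℕ} (φ : PExp M N K) : Prop :=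
  ∃ (l : List ((i : Fin M) × Fin (N i))) (f : (i : Fin M) × Fin (N i) → Bool),
    l.Nodup ∧ (∀ p, p ∈ l) ∧ φ = conjListP (l.map fun p => PExp.sliteral p (f p))

/-- A one-sorted m.e.c.: a conjunction of literals in which each variable of one sort `i`
occurs exactly once. -/
def IsOneSortedMecP {M : ℕ} {N : Fin M → ℕ} {K : ℕ} (φ : PExp M N K) : Prop :=
  ∃ (i : Fin M) (l : List (Fin (N i))) (f : Fin (N i) → Bool),
    l.Nodup ∧ (∀ j, j ∈ l) ∧
      φ = conjListP (l.map fun j => PExp.sliteral ⟨i, j⟩ (f j))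

/-- A diamond expression: a basic expression of the form `◇≤φ` or `◇≥φ`. -/
def IsDiamondP {M : ℕ} {N : Fin M → ℕ} {K : ℕ} : PExp M N K → Prop
  | .dle _ => True
  | .dge _ => True
  | _ => False

/-- A conjunction of diamond expressions. -/
def IsDiamondConjP {M : ℕ} {N : Fin M → ℕ} {K : ℕ} (ρ : PExp M N K) : Prop :=
  ∃ l : List (PExp M N K), l ≠ [] ∧ (∀ χ ∈ l, IsDiamondP χ) ∧ ρ = conjListP l

/-- Formulas of classical propositional logic over countably many variables. -/
inductive PropForm : Type
  | var (n : ℕ)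
  | bot
  | top
  | and (φ ψ : PropForm)
  | or (φ ψ : PropForm)
  | not (φ : PropForm)

/-- Boolean evaluation of a classical propositional formula. -/
def PropForm.beval (v : ℕ → Bool) : PropForm → Bool
  | .var n => v n
  | .bot => false
  | .top => true
  | .and φ ψ => φ.beval v && ψ.beval v
  | .or φ ψ => φ.beval v || ψ.beval v
  | .not φ => !φ.beval v

/-- Uniform replacement of the variables of a classical propositional formula by basic
expressions of `LAEPC`. -/
def PropForm.substP {M : ℕ} {N : Fin M → ℕ} {K : ℕ} (σ : ℕ → PExp M N K) :
    PropForm → PExp M N K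
  | .var n => σ n
  | .bot => .bot
  | .top => .top
  | .and φ ψ => .and (φ.substP σ) (ψ.substP σ)
  | .or φ ψ => .or (φ.substP σ) (ψ.substP σ)
  | .not φ => .not (φ.substP σ)

/-- Formulas: Boolean combinations of graded implications `φ ⤳_c ψ`. -/
inductive PFml (M : ℕ) (N : Fin M → ℕ) (K : ℕ) (V : Type) : Type
  | gi (φ : PExp M N K) (c : V) (ψ : PExp M N K)
  | and (Φ Ψ : PFml M N K V)
  | or (Φ Ψ : PFml M N K V)
  | not (Φ : PFml M N K V)

/-- The (definable) outer-level implication `Φ → Ψ := ¬Φ ∨ Ψ`. -/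
def PFml.imp {M : ℕ} {N : Fin M → ℕ} {K : ℕ} {V : Type} (Φ Ψ : PFml M N K V) :
    PFml M N K V :=
  PFml.or (PFml.not Φ) Ψ

/-- The (definable) outer-level equivalence `Φ ↔ Ψ`. -/
def PFml.iff {M : ℕ} {N : Fin M → ℕ} {K : ℕ} {V : Type} (Φ Ψ : PFml M N K V) :
    PFml M N K V :=
  PFml.and (Φ.imp Ψ) (Ψ.imp Φ)

/-- Boolean evaluation of a formula given truth values for the graded implications
occurring in it. -/
def PFml.peval {M : ℕ} {N : Fin M → ℕ} {K : ℕ} {V : Type}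
    (g : PExp M N K → V → PExp M N K → Bool) : PFml M N K V → Bool
  | .gi φ c ψ => g φ c ψ
  | .and Φ Ψ => Φ.peval g && Ψ.peval g
  | .or Φ Ψ => Φ.peval g || Ψ.peval g
  | .not Φ => !Φ.peval g

/-! ## The proof system of `LAEPC` -/

/-- Provability in `LAEPC` from a theory `Th`: axioms (A1'), (A2)–(A11), (A12)–(A14),
(A17), (A19) unrestricted, (A15), (A16), (A18) in their sort-restricted forms, and
(A20)–(A22), with modus ponens as the only rule. -/
inductive LAEPCProv {M : ℕ} {N : Fin M → ℕ} {K : ℕ} (T : FiniteTNorm)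
    (Th : Set (PFml M N K T.V)) : PFml M N K T.V → Prop
  | hyp {Φ} (h : Φ ∈ Th) : LAEPCProv T Th Φ
  | mp {Φ Ψ} (h₁ : LAEPCProv T Th Φ) (h₂ : LAEPCProv T Th (Φ.imp Ψ)) : LAEPCProv T Th Ψ
  | a1' {φ ψ : PExp M N K}
      (h : ∃ (φ' ψ' : PropForm) (σ : ℕ → PExp M N K),
        (∀ v, φ'.beval v = true → ψ'.beval v = true) ∧
          φ = φ'.substP σ ∧ ψ = ψ'.substP σ) :
      LAEPCProv T Th (.gi φ T.one ψ)
  | a2 (φ ψ : PExp M N K) :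
      LAEPCProv T Th ((PFml.gi φ T.one ψ).imp (.gi (φ.and ψ.not) T.one .bot))
  | a3 (φ ψ : PExp M N K) {c d : T.V} (h : (d : ℝ) ≤ (c : ℝ)) :
      LAEPCProv T Th ((PFml.gi φ c ψ).imp (.gi φ d ψ))
  | a4 (φ ψ : PExp M N K) :
      LAEPCProv T Th ((PFml.not (.gi ψ T.one .bot)).imp (.gi φ T.zero ψ))
  | a5 (φ : PExp M N K) (c : T.V) :
      LAEPCProv T Th ((PFml.gi φ c .bot).imp (.gi φ T.one .bot))
  | a6 {δ ε : PExp M N K} (c : T.V) (hδ : IsMecP δ) (hε : IsMecP ε) :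
      LAEPCProv T Th
        ((PFml.and (.not (.gi δ T.one .bot)) (.gi δ c ε)).imp (.gi ε c δ))
  | a7 (φ ψ χ : PExp M N K) (c : T.V) :
      LAEPCProv T Th ((PFml.and (.gi φ c χ) (.gi ψ c χ)).imp (.gi (φ.or ψ) c χ))
  | a8 {ε : PExp M N K} (φ ψ : PExp M N K) (c : T.V) (hε : IsMecP ε) :
      LAEPCProv T Th ((PFml.gi ε c (φ.or ψ)).imp (.or (.gi ε c φ) (.gi ε c ψ)))
  | a9 (φ ψ χ : PExp M N K) (c d : T.V) :
      LAEPCProv T Th ((PFml.and (.gi φ c ψ) (.gi ψ d χ)).imp (.gi φ (T.op c d) χ))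
  | a10 : LAEPCProv T Th (PFml.not (.gi .top T.one .bot))
  | a11 {Φ : PFml M N K T.V}
      (h : ∀ g : PExp M N K → T.V → PExp M N K → Bool, Φ.peval g = true) :
      LAEPCProv T Th Φ
  | a12a (φ : PExp M N K) : LAEPCProv T Th (.gi φ T.one φ.dle)
  | a12b (φ : PExp M N K) : LAEPCProv T Th (.gi φ T.one φ.dge)
  | a13a (φ : PExp M N K) : LAEPCProv T Th (.gi φ.dle.dle T.one φ.dle)
  | a13b (φ : PExp M N K) : LAEPCProv T Th (.gi φ.dge.dge T.one φ.dge)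
  | a14a : LAEPCProv T Th (.gi (PExp.bot.dle) T.one .bot)
  | a14b : LAEPCProv T Th (.gi (PExp.bot.dge) T.one .bot)
  | a15a {φ ψ : PExp M N K} (hs : ∃ i, BelongsTo i φ ∧ BelongsTo i ψ) :
      LAEPCProv T Th (.or (.gi φ.dle T.one ψ.dle) (.gi ψ.dle T.one φ.dle))
  | a15b {φ ψ : PExp M N K} (hs : ∃ i, BelongsTo i φ ∧ BelongsTo i ψ) :
      LAEPCProv T Th (.or (.gi φ.dge T.one ψ.dge) (.gi ψ.dge T.one φ.dge))
  | a16 {ε : PExp M N K} (hε : IsOneSortedMecP ε) :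
      LAEPCProv T Th (.gi (ε.dle.and ε.dge) T.one ε)
  | a17a (φ ψ : PExp M N K) (c : T.V) :
      LAEPCProv T Th ((PFml.gi φ c ψ).imp (.gi φ.dle c ψ.dle))
  | a17b (φ ψ : PExp M N K) (c : T.V) :
      LAEPCProv T Th ((PFml.gi φ c ψ).imp (.gi φ.dge c ψ.dge))
  | a18a {φ : PExp M N K} (ψ : PExp M N K) (hs : ∃ i, BelongsTo i φ) :
      LAEPCProv T Th
        ((PFml.gi (φ.and ψ.dle) T.one .bot).imp (.gi (φ.dge.and ψ.dle) T.one .bot))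
  | a18b {φ : PExp M N K} (ψ : PExp M N K) (hs : ∃ i, BelongsTo i φ) :
      LAEPCProv T Th
        ((PFml.gi (φ.and ψ.dge) T.one .bot).imp (.gi (φ.dle.and ψ.dge) T.one .bot))
  | a19 {ρ σ : PExp M N K} (φ : PExp M N K) (c : T.V)
      (hρ : IsDiamondConjP ρ) (hσ : IsDiamondConjP σ) :
      LAEPCProv T Th
        ((PFml.and (.and (.not (.gi (ρ.and σ) T.one .bot)) (.gi φ c ρ)) (.gi φ c σ)).imp
          (.gi φ c (ρ.and σ)))
  | a20 {φ ψ φ' ψ' : PExp M N K} (c : T.V) (hd : DisjointSorted (φ.and ψ) (φ'.and ψ')) :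
      LAEPCProv T Th
        ((PFml.not (.gi (φ.and φ') T.one .bot)).imp
          ((PFml.and (.gi φ c ψ) (.gi φ' c ψ')).iff (.gi (φ.and φ') c (ψ.and ψ'))))
  | a21a {χ ψ : PExp M N K} (φ : PExp M N K) (hd : DisjointSorted χ ψ) :
      LAEPCProv T Th
        ((PFml.gi ((φ.dge.and χ).and ψ) T.one .bot).imp
          (.or (.gi (φ.dge.and χ) T.one .bot) (.gi (φ.dge.and ψ) T.one .bot)))
  | a21b {χ ψ : PExp M N K} (φ : PExp M N K) (hd : DisjointSorted χ ψ) :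
      LAEPCProv T Th
        ((PFml.gi ((φ.dle.and χ).and ψ) T.one .bot).imp
          (.or (.gi (φ.dle.and χ) T.one .bot) (.gi (φ.dle.and ψ) T.one .bot)))
  | a22 {ε : PExp M N K} (k : Fin K) (hε : IsMecP ε) :
      LAEPCProv T Th (.or (.gi ε T.one (.uvar k)) (.gi ε T.one (.not (.uvar k))))

/-! ## Semantics of `LAEPC` -/

/-- An evaluation of the basic expressions of `LAEPC` in a component-wise ordered
similarity space: it commutes with the Boolean operations, interprets `◇≤` and `◇≥` by
the product diamonds, interprets each sorted variable of sort `i` by a cylindrical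
extension of a subset of `W i`, interprets each unsorted variable by a union of
intersections of the interpretations of sorted variables and their complements, and
separates any two distinct worlds by some variable. -/
structure LAEPCEval (M : ℕ) (N : Fin M → ℕ) (K : ℕ) (W : Fin M → Type)
    [∀ i, Fintype (W i)] [∀ i, Nonempty (W i)] [∀ i, LinearOrder (W i)] where
  e : PExp M N K → Set (∀ i, W i)
  map_bot : e .bot = ∅
  map_top : e .top = Set.univ
  map_and : ∀ φ ψ, e (φ.and ψ) = e φ ∩ e ψ
  map_or : ∀ φ ψ, e (φ.or ψ) = e φ ∪ e ψ
  map_not : ∀ φ, e φ.not = (e φ)ᶜ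
  map_dle : ∀ φ, e φ.dle = pDcl (e φ)
  map_dge : ∀ φ, e φ.dge = pUcl (e φ)
  svar_cyl : ∀ (i : Fin M) (j : Fin (N i)), ∃ A : Set (W i), e (.svar i j) = cyl i A
  uvar_alg : ∀ k : Fin K, ∃ G : Set ((i : Fin M) × Fin (N i) → Bool),
    e (.uvar k) = ⋃ g ∈ G, ⋂ p : (i : Fin M) × Fin (N i),
      (if g p then e (.svar p.1 p.2) else (e (.svar p.1 p.2))ᶜ)
  separating : ∀ v w : ∀ i, W i, v ≠ w →
    (∃ (i : Fin M) (j : Fin (N i)), Xor' (v ∈ e (.svar i j)) (w ∈ e (.svar i j))) ∨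
    (∃ k : Fin K, Xor' (v ∈ e (.uvar k)) (w ∈ e (.uvar k)))

/-- Satisfaction of a formula of `LAEPC` by an evaluation in a component-wise ordered
similarity space. -/
def LAEPCSat {T : FiniteTNorm} {M : ℕ} {N : Fin M → ℕ} {K : ℕ} {W : Fin M → Type}
    [∀ i, Fintype (W i)] [∀ i, Nonempty (W i)] [∀ i, LinearOrder (W i)]
    (hM : 0 < M) (sps : ∀ i, TOSimilaritySpace T (W i)) (ev : LAEPCEval M N K W) :
    PFml M N K T.V → Prop
  | .gi φ c ψ => ev.e φ ⊆ pNbhd hM sps c (ev.e ψ)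
  | .and Φ Ψ => LAEPCSat hM sps ev Φ ∧ LAEPCSat hM sps ev Ψ
  | .or Φ Ψ => LAEPCSat hM sps ev Φ ∨ LAEPCSat hM sps ev Ψ
  | .not Φ => ¬ LAEPCSat hM sps ev Φ

/-- Semantic entailment in `LAEPC`: every evaluation in every component-wise ordered
similarity space that satisfies all members of the theory also satisfies the formula. -/
def LAEPCEntails {M : ℕ} {N : Fin M → ℕ} {K : ℕ} (hM : 0 < M) (T : FiniteTNorm)
    (Th : Set (PFml M N K T.V)) (Φ : PFml M N K T.V) : Prop :=
  ∀ (W : Fin M → Type) [∀ i, Fintype (W i)] [∀ i, Nonempty (W i)]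
    [∀ i, LinearOrder (W i)],
    ∀ (sps : ∀ i, TOSimilaritySpace T (W i)) (ev : LAEPCEval M N K W),
      (∀ Ψ ∈ Th, LAEPCSat hM sps ev Ψ) → LAEPCSat hM sps ev Φ

/-!
Soundness is a check of the axioms one by one. The substantial ones reduce to two facts about
products of chains: an expression mentioning only the sorts in `I` denotes a set depending only on
the coordinates in `I` (A15, A16, A18, A20, A21), and a point lying between two points that are
`c`-similar to `w` is itself `c`-similar to `w` (A17, A19).

For completeness, a consistent theory extends to a maximal consistent `Δ` (Teichmüller–Tukey),
which yields a canonical model. Its worlds of sort `i` are the one-sorted m.e.c.s consistent with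
`Δ`, ordered by `◇≤`-entailment (total by A15, antisymmetric by A16) and compared by the largest
`c` with `ε ⤳_c ε'` (symmetric by A6, compatible with the order by A17 and A19). By A21 a tuple of
such m.e.c.s is consistent as a whole, so product worlds are the consistent m.e.c.s, and a basic
expression is interpreted by the m.e.c.s entailing it. Since A20 splits graded implications
between m.e.c.s into their sorts, a formula holds in the canonical model iff `Δ` proves it.
-/

namespace FiniteTNorm

variable {T : FiniteTNorm}

lemma op_one' (c : T.V) : T.op c T.one = c := T.op_one c

lemma one_op (c : T.V) : T.op T.one c = c := by
  rw [T.op_comm, op_one']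

lemma coe_le_one (c : T.V) : (c : ℝ) ≤ (T.one : ℝ) := (T.subset c.2).2

lemma zero_le_coe (c : T.V) : (T.zero : ℝ) ≤ (c : ℝ) := (T.subset c.2).1

end FiniteTNorm

namespace PExp

variable {M : ℕ} {N : Fin M → ℕ} {K : ℕ}

def evalB (v : PExp M N K → Bool) : PExp M N K → Bool
  | .bot => false
  | .top => true
  | .and φ ψ => φ.evalB v && ψ.evalB v
  | .or φ ψ => φ.evalB v || ψ.evalB v
  | .not φ => !φ.evalB v
  | .svar i j => v (.svar i j)
  | .uvar k => v (.uvar k)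
  | .dle φ => v (.dle φ)
  | .dge φ => v (.dge φ)

def atoms : PExp M N K → List (PExp M N K)
  | .bot => []
  | .top => []
  | .and φ ψ => φ.atoms ++ ψ.atoms
  | .or φ ψ => φ.atoms ++ ψ.atoms
  | .not φ => φ.atoms
  | .svar i j => [.svar i j]
  | .uvar k => [.uvar k]
  | .dle φ => [.dle φ]
  | .dge φ => [.dge φ]

open Classical in
noncomputable def toPropForm (L : List (PExp M N K)) : PExp M N K → PropForm
  | .bot => .bot
  | .top => .top
  | .and φ ψ => .and (φ.toPropForm L) (ψ.toPropForm L)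
  | .or φ ψ => .or (φ.toPropForm L) (ψ.toPropForm L)
  | .not φ => .not (φ.toPropForm L)
  | .svar i j => .var (L.idxOf (.svar i j))
  | .uvar k => .var (L.idxOf (.uvar k))
  | .dle φ => .var (L.idxOf (.dle φ))
  | .dge φ => .var (L.idxOf (.dge φ))

open Classical in
lemma getD_idxOf {L : List (PExp M N K)} {a : PExp M N K} (h : a ∈ L) :
    L.getD (L.idxOf a) .bot = a := by
  rw [List.getD_eq_getElem _ _ (List.idxOf_lt_length_iff.2 h)]
  exact List.getElem_idxOf _

lemma substP_toPropForm {L : List (PExp M N K)} {φ : PExp M N K} (h : φ.atoms ⊆ L) :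
    (φ.toPropForm L).substP (fun n => L.getD n .bot) = φ := by
  induction φ with
  | bot | top => rfl
  | and φ ψ ihφ ihψ | or φ ψ ihφ ihψ =>
    simp only [atoms, List.append_subset] at h
    simp only [toPropForm, PropForm.substP, ihφ h.1, ihψ h.2]
  | not φ ihφ => simp only [toPropForm, PropForm.substP, ihφ h]
  | svar | uvar | dle | dge => exact getD_idxOf (h (by simp [atoms]))

open Classical in
lemma beval_toPropForm (L : List (PExp M N K)) (v : ℕ → Bool) (φ : PExp M N K) :
    (φ.toPropForm L).beval v = φ.evalB (fun a => v (L.idxOf a)) := by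
  induction φ with
  | and φ ψ ihφ ihψ | or φ ψ ihφ ihψ =>
    simp only [toPropForm, PropForm.beval, evalB, ihφ, ihψ]
  | not φ ihφ => simp only [toPropForm, PropForm.beval, evalB, ihφ]
  | _ => rfl

end PExp

namespace DependsOn

variable {ι : Type*} {α : ι → Type*} {I : Set ι} {X Y : Set (∀ i, α i)}

lemma mem_compl (hX : DependsOn (· ∈ X) I) : DependsOn (· ∈ Xᶜ) I :=
  fun _ _ h => by simp only [Set.mem_compl_iff, hX h]

lemma mem_inter (hX : DependsOn (· ∈ X) I) (hY : DependsOn (· ∈ Y) I) :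
    DependsOn (· ∈ X ∩ Y) I :=
  fun _ _ h => by simp only [Set.mem_inter_iff, hX h, hY h]

lemma mem_union (hX : DependsOn (· ∈ X) I) (hY : DependsOn (· ∈ Y) I) :
    DependsOn (· ∈ X ∪ Y) I :=
  fun _ _ h => by simp only [Set.mem_union, hX h, hY h]

lemma update_mem [DecidableEq ι] (hX : DependsOn (· ∈ X) I) {x : ∀ i, α i} (hx : x ∈ X)
    {l : ι} (hl : l ∉ I) (a : α l) : Function.update x l a ∈ X :=
  (hX fun _ hi => (Function.update_of_ne (ne_of_mem_of_not_mem hi hl) _ _).symm).mp hx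

lemma piecewise_mem [DecidablePred (· ∈ I)] (hX : DependsOn (· ∈ X) I) {x : ∀ i, α i}
    (hx : x ∈ X) (y : ∀ i, α i) : I.piecewise x y ∈ X :=
  (hX fun _ hi => (Set.piecewise_eq_of_mem _ _ _ hi).symm).mp hx

lemma piecewise_mem_of_compl [DecidablePred (· ∈ I)] (hX : DependsOn (· ∈ X) Iᶜ)
    {y : ∀ i, α i} (hy : y ∈ X) (x : ∀ i, α i) : I.piecewise x y ∈ X :=
  (hX fun _ hi => (Set.piecewise_eq_of_notMem _ _ _ hi).symm).mp hy

lemma inter_inter_eq_empty [DecidablePred (· ∈ I)] {R : Set (∀ i, α i)}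
    (hX : DependsOn (· ∈ X) I) (hY : DependsOn (· ∈ Y) Iᶜ)
    (hR : ∀ u ∈ R, ∀ w ∈ R, I.piecewise u w ∈ R) (h : R ∩ X ∩ Y = ∅) :
    R ∩ X = ∅ ∨ R ∩ Y = ∅ := by
  refine or_iff_not_imp_left.2 fun hRX => Set.eq_empty_of_forall_notMem fun w ⟨hwR, hwY⟩ => ?_
  obtain ⟨u, huR, huX⟩ := Set.nonempty_iff_ne_empty.2 hRX
  exact h.subset ⟨⟨hR u huR w hwR, hX.piecewise_mem huX w⟩, hY.piecewise_mem_of_compl hwY u⟩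

end DependsOn

namespace TOSimilaritySpace

variable {T : FiniteTNorm} {α : Type} [Fintype α] [Nonempty α] [LinearOrder α]
  (sp : TOSimilaritySpace T α) {c : T.V}

lemma S_self (w : α) : sp.S w w = T.one := (sp.eq_one_iff w w).2 rfl

lemma le_S_self (w : α) : (c : ℝ) ≤ sp.S w w := by
  rw [S_self]
  exact FiniteTNorm.coe_le_one c

lemma S_le_S_of_between_left {a t b : α} (hat : a ≤ t) (htb : t ≤ b) :
    (sp.S a b : ℝ) ≤ sp.S t b :=
  (sp.compat a t b hat htb).trans (min_le_right _ _)

lemma S_le_S_of_between_right {a t b : α} (hat : a ≤ t) (htb : t ≤ b) :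
    (sp.S a b : ℝ) ≤ sp.S a t :=
  (sp.compat a t b hat htb).trans (min_le_left _ _)

lemma le_S_of_between {w a t b : α} (hat : a ≤ t) (htb : t ≤ b) (ha : (c : ℝ) ≤ sp.S w a)
    (hb : (c : ℝ) ≤ sp.S w b) : (c : ℝ) ≤ sp.S w t := by
  rcases le_total w t with hwt | htw
  · exact hb.trans (sp.S_le_S_of_between_right hwt htb)
  · rw [sp.symm] at ha ⊢
    exact ha.trans (sp.S_le_S_of_between_left hat htw)

lemma exists_mem_uIcc_le_S {w r s : α} (hr : (c : ℝ) ≤ sp.S w r) (hs : (c : ℝ) ≤ sp.S w s)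
    (x : α) : ∃ t, t ∈ Set.uIcc r x ∧ t ∈ Set.uIcc s x ∧ (c : ℝ) ≤ sp.S w t := by
  simp only [Set.mem_uIcc]
  rcases le_total r s with hrs | hsr
  · rcases le_total x r with hxr | hrx
    · exact ⟨r, Or.inr ⟨hxr, le_rfl⟩, Or.inr ⟨hxr, hrs⟩, hr⟩
    · rcases le_total x s with hxs | hsx
      · exact ⟨x, Or.inl ⟨hrx, le_rfl⟩, Or.inr ⟨le_rfl, hxs⟩,
          sp.le_S_of_between hrx hxs hr hs⟩
      · exact ⟨s, Or.inl ⟨hrs, hsx⟩, Or.inl ⟨le_rfl, hsx⟩, hs⟩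
  · rcases le_total x s with hxs | hsx
    · exact ⟨s, Or.inr ⟨hxs, hsr⟩, Or.inr ⟨hxs, le_rfl⟩, hs⟩
    · rcases le_total x r with hxr | hrx
      · exact ⟨x, Or.inr ⟨le_rfl, hxr⟩, Or.inl ⟨hsx, le_rfl⟩,
          sp.le_S_of_between hsx hxr hs hr⟩
      · exact ⟨r, Or.inl ⟨le_rfl, hrx⟩, Or.inl ⟨hsr, hrx⟩, hr⟩

lemma exists_le_le_S {w v b : α} (hwv : w ≤ v) (hb : (c : ℝ) ≤ sp.S v b) :
    ∃ t ≤ b, (c : ℝ) ≤ sp.S w t := by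
  rcases le_total b w with hbw | hwb
  · refine ⟨b, le_rfl, ?_⟩
    rw [sp.symm] at hb ⊢
    exact hb.trans (sp.S_le_S_of_between_right hbw hwv)
  · exact ⟨w, hwb, sp.le_S_self w⟩

lemma exists_ge_le_S {w v b : α} (hvw : v ≤ w) (hb : (c : ℝ) ≤ sp.S v b) :
    ∃ t, b ≤ t ∧ (c : ℝ) ≤ sp.S w t := by
  rcases le_total w b with hwb | hbw
  · exact ⟨b, le_rfl, hb.trans (sp.S_le_S_of_between_left hvw hwb)⟩
  · exact ⟨w, hbw, sp.le_S_self w⟩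

end TOSimilaritySpace

namespace LAEPC

open FiniteTNorm

section DerivedRules

variable {M : ℕ} {N : Fin M → ℕ} {K : ℕ} {T : FiniteTNorm} {Th : Set (PFml M N K T.V)}

theorem prov_gi_of_taut {φ ψ : PExp M N K} (h : ∀ v, φ.evalB v = true → ψ.evalB v = true) :
    LAEPCProv T Th (.gi φ T.one ψ) := by
  set L := φ.atoms ++ ψ.atoms
  refine .a1' ⟨φ.toPropForm L, ψ.toPropForm L, fun n => L.getD n .bot, fun v hv => ?_,
    (PExp.substP_toPropForm (List.subset_append_left _ _)).symm,
    (PExp.substP_toPropForm (List.subset_append_right _ _)).symm⟩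
  rw [PExp.beval_toPropForm] at hv ⊢
  exact h _ hv

lemma peval_imp (g : PExp M N K → T.V → PExp M N K → Bool) (Φ Ψ : PFml M N K T.V) :
    (Φ.imp Ψ).peval g = (!Φ.peval g || Ψ.peval g) := rfl

theorem prov_of_peval {Φ Ψ : PFml M N K T.V} (h : ∀ g, Φ.peval g = true → Ψ.peval g = true)
    (hΦ : LAEPCProv T Th Φ) : LAEPCProv T Th Ψ := by
  refine hΦ.mp (.a11 fun g => ?_)
  rw [peval_imp]
  cases hg : Φ.peval g
  · rfl
  · simp [h g hg]

theorem prov_of_peval₂ {Φ₁ Φ₂ Ψ : PFml M N K T.V}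
    (h : ∀ g, Φ₁.peval g = true → Φ₂.peval g = true → Ψ.peval g = true)
    (h₁ : LAEPCProv T Th Φ₁) (h₂ : LAEPCProv T Th Φ₂) : LAEPCProv T Th Ψ := by
  refine h₂.mp (prov_of_peval (fun g hg => ?_) h₁)
  rw [peval_imp]
  cases hg₂ : Φ₂.peval g
  · rfl
  · simp [h g hg hg₂]

theorem prov_and {Φ Ψ : PFml M N K T.V} (hΦ : LAEPCProv T Th Φ) (hΨ : LAEPCProv T Th Ψ) :
    LAEPCProv T Th (Φ.and Ψ) :=
  prov_of_peval₂ (fun g h₁ h₂ => by simp [PFml.peval, h₁, h₂]) hΦ hΨ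

theorem gi_refl (φ : PExp M N K) : LAEPCProv T Th (.gi φ T.one φ) :=
  prov_gi_of_taut fun _ h => h

theorem gi_top (φ : PExp M N K) : LAEPCProv T Th (.gi φ T.one .top) :=
  prov_gi_of_taut fun _ _ => rfl

theorem gi_and_left (φ ψ : PExp M N K) : LAEPCProv T Th (.gi (φ.and ψ) T.one φ) :=
  prov_gi_of_taut fun v h => by simp_all [PExp.evalB]

theorem gi_and_right (φ ψ : PExp M N K) : LAEPCProv T Th (.gi (φ.and ψ) T.one ψ) :=
  prov_gi_of_taut fun v h => by simp_all [PExp.evalB]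

theorem gi_trans_left {φ ψ χ : PExp M N K} {c : T.V} (h₁ : LAEPCProv T Th (.gi φ T.one ψ))
    (h₂ : LAEPCProv T Th (.gi ψ c χ)) : LAEPCProv T Th (.gi φ c χ) := by
  simpa only [one_op] using (prov_and h₁ h₂).mp (.a9 φ ψ χ T.one c)

theorem gi_trans_right {φ ψ χ : PExp M N K} {c : T.V} (h₁ : LAEPCProv T Th (.gi φ c ψ))
    (h₂ : LAEPCProv T Th (.gi ψ T.one χ)) : LAEPCProv T Th (.gi φ c χ) := by
  simpa only [op_one'] using (prov_and h₁ h₂).mp (.a9 φ ψ χ c T.one)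

theorem gi_trans {φ ψ χ : PExp M N K} (h₁ : LAEPCProv T Th (.gi φ T.one ψ))
    (h₂ : LAEPCProv T Th (.gi ψ T.one χ)) : LAEPCProv T Th (.gi φ T.one χ) :=
  gi_trans_left h₁ h₂

theorem gi_iff_of_equiv {φ φ' ψ ψ' : PExp M N K} {c : T.V}
    (hφ : LAEPCProv T Th (.gi φ T.one φ')) (hφ' : LAEPCProv T Th (.gi φ' T.one φ))
    (hψ : LAEPCProv T Th (.gi ψ T.one ψ')) (hψ' : LAEPCProv T Th (.gi ψ' T.one ψ)) :
    LAEPCProv T Th (.gi φ c ψ) ↔ LAEPCProv T Th (.gi φ' c ψ') :=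
  ⟨fun h => gi_trans_left hφ' (gi_trans_right h hψ),
    fun h => gi_trans_left hφ (gi_trans_right h hψ')⟩

theorem gi_of_le {φ ψ : PExp M N K} {c d : T.V} (hdc : (d : ℝ) ≤ c)
    (h : LAEPCProv T Th (.gi φ c ψ)) : LAEPCProv T Th (.gi φ d ψ) :=
  h.mp (.a3 φ ψ hdc)

theorem gi_or {φ ψ χ : PExp M N K} {c : T.V} (h₁ : LAEPCProv T Th (.gi φ c χ))
    (h₂ : LAEPCProv T Th (.gi ψ c χ)) : LAEPCProv T Th (.gi (φ.or ψ) c χ) :=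
  (prov_and h₁ h₂).mp (.a7 φ ψ χ c)

theorem gi_of_gi_bot {φ ψ : PExp M N K} {c : T.V} (h : LAEPCProv T Th (.gi φ T.one .bot)) :
    LAEPCProv T Th (.gi φ c ψ) :=
  gi_of_le (coe_le_one c) (gi_trans h (prov_gi_of_taut fun _ hv => by simp [PExp.evalB] at hv))

/-- (A1') cannot combine two premises: (A2) turns them into inconsistencies, which (A7)
collects. -/
theorem gi_and {φ ψ χ : PExp M N K} (h₁ : LAEPCProv T Th (.gi φ T.one ψ))
    (h₂ : LAEPCProv T Th (.gi φ T.one χ)) : LAEPCProv T Th (.gi φ T.one (ψ.and χ)) := by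
  have hψ := h₁.mp (.a2 φ ψ)
  have hχ := h₂.mp (.a2 φ χ)
  have split : LAEPCProv T Th
      (.gi φ T.one ((φ.and (ψ.and χ)).or ((φ.and ψ.not).or (φ.and χ.not)))) :=
    prov_gi_of_taut fun v => by
      simp only [PExp.evalB]; cases φ.evalB v <;> cases ψ.evalB v <;> cases χ.evalB v <;> simp
  refine gi_trans split (gi_or (prov_gi_of_taut fun v => ?_) (gi_of_gi_bot (gi_or hψ hχ)))
  simp only [PExp.evalB, Bool.and_eq_true]
  exact And.right

theorem gi_and_bot_of_gi_not {φ ψ : PExp M N K} (h : LAEPCProv T Th (.gi φ T.one ψ.not)) :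
    LAEPCProv T Th (.gi (φ.and ψ) T.one .bot) :=
  gi_trans (prov_gi_of_taut fun v => by
    simp only [PExp.evalB]; cases φ.evalB v <;> cases ψ.evalB v <;> simp) (h.mp (.a2 _ _))

def disjListP : List (PExp M N K) → PExp M N K
  | [] => .bot
  | [φ] => φ
  | φ :: χ :: rest => .or φ (disjListP (χ :: rest))

lemma conjListP_cons (φ : PExp M N K) {l : List (PExp M N K)} (h : l ≠ []) :
    conjListP (φ :: l) = .and φ (conjListP l) := by
  cases l with
  | nil => exact absurd rfl h
  | cons => rfl

lemma disjListP_cons (φ : PExp M N K) {l : List (PExp M N K)} (h : l ≠ []) :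
    disjListP (φ :: l) = .or φ (disjListP l) := by
  cases l with
  | nil => exact absurd rfl h
  | cons => rfl

lemma evalB_conjListP (v : PExp M N K → Bool) (l : List (PExp M N K)) :
    (conjListP l).evalB v = l.all (·.evalB v) := by
  induction l with
  | nil => rfl
  | cons φ r ih =>
    rcases r with _ | ⟨χ, s⟩
    · simp [conjListP]
    · rw [conjListP_cons _ (List.cons_ne_nil _ _)]
      simp [PExp.evalB, ih]

lemma evalB_disjListP (v : PExp M N K → Bool) (l : List (PExp M N K)) :
    (disjListP l).evalB v = l.any (·.evalB v) := by
  induction l with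
  | nil => rfl
  | cons φ r ih =>
    rcases r with _ | ⟨χ, s⟩
    · simp [disjListP]
    · rw [disjListP_cons _ (List.cons_ne_nil _ _)]
      simp [PExp.evalB, ih]

theorem gi_disjListP_of_mem {l : List (PExp M N K)} {φ : PExp M N K} (h : φ ∈ l) :
    LAEPCProv T Th (.gi φ T.one (disjListP l)) :=
  prov_gi_of_taut fun v hv => by
    rw [evalB_disjListP]
    exact List.any_eq_true.2 ⟨φ, h, hv⟩

theorem gi_disjListP {l : List (PExp M N K)} {χ : PExp M N K} {c : T.V}
    (h : ∀ φ ∈ l, LAEPCProv T Th (.gi φ c χ)) : LAEPCProv T Th (.gi (disjListP l) c χ) := by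
  induction l with
  | nil => exact gi_of_gi_bot (gi_refl _)
  | cons φ r ih =>
    rcases r with _ | ⟨ψ, s⟩
    · exact h φ List.mem_cons_self
    · rw [disjListP_cons _ (List.cons_ne_nil _ _)]
      exact gi_or (h φ List.mem_cons_self) (ih fun χ hχ => h χ (List.mem_cons_of_mem _ hχ))

abbrev Pattern (M : ℕ) (N : Fin M → ℕ) := ((i : Fin M) × Fin (N i)) → Bool

noncomputable def mec (K : ℕ) (g : Pattern M N) : PExp M N K :=
  conjListP (Finset.univ.toList.map fun p => PExp.sliteral p (g p))

noncomputable def sortMec (K : ℕ) (i : Fin M) (f : Fin (N i) → Bool) : PExp M N K :=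
  conjListP (Finset.univ.toList.map fun j => PExp.sliteral ⟨i, j⟩ (f j))

def part (g : Pattern M N) (i : Fin M) : Fin (N i) → Bool := fun j => g ⟨i, j⟩

noncomputable def sortConj (g : Pattern M N) (l : List (Fin M)) : PExp M N K :=
  conjListP (l.map fun i => sortMec K i (part g i))

lemma isMecP_mec (g : Pattern M N) : IsMecP (mec K g) :=
  ⟨_, g, Finset.nodup_toList _, fun _ => by simp, rfl⟩

lemma isOneSortedMecP_sortMec (i : Fin M) (f : Fin (N i) → Bool) :
    IsOneSortedMecP (sortMec K i f) :=
  ⟨i, _, f, Finset.nodup_toList _, fun _ => by simp, rfl⟩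

lemma evalB_sliteral (v : PExp M N K → Bool) (p : (i : Fin M) × Fin (N i)) (b : Bool) :
    (PExp.sliteral p b).evalB v = true ↔ v (.svar p.1 p.2) = b := by
  cases b <;> simp [PExp.sliteral, PExp.evalB]

lemma evalB_mec (v : PExp M N K → Bool) (g : Pattern M N) :
    (mec K g).evalB v = true ↔ ∀ p, v (.svar p.1 p.2) = g p := by
  simp [mec, evalB_conjListP, evalB_sliteral]

lemma evalB_sortMec (v : PExp M N K → Bool) (i : Fin M) (f : Fin (N i) → Bool) :
    (sortMec K i f).evalB v = true ↔ ∀ j, v (.svar i j) = f j := by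
  simp [sortMec, evalB_conjListP, evalB_sliteral]

lemma evalB_sortConj (v : PExp M N K → Bool) (g : Pattern M N) (l : List (Fin M)) :
    (sortConj g l : PExp M N K).evalB v = true ↔
      ∀ i ∈ l, ∀ j, v (.svar i j) = g ⟨i, j⟩ := by
  simp [sortConj, evalB_conjListP, evalB_sortMec, part]

theorem mec_gi_sortMec (g : Pattern M N) (i : Fin M) :
    LAEPCProv T Th (.gi (mec K g) T.one (sortMec K i (part g i))) :=
  prov_gi_of_taut fun v hv => (evalB_sortMec v i _).2 fun j => (evalB_mec v g).1 hv ⟨i, j⟩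

theorem sortMec_and_sortMec_gi_bot {i : Fin M} {f f' : Fin (N i) → Bool} (h : f ≠ f') :
    LAEPCProv T Th (.gi ((sortMec K i f).and (sortMec K i f')) T.one .bot) :=
  prov_gi_of_taut fun v hv => by
    simp only [PExp.evalB, Bool.and_eq_true, evalB_sortMec] at hv
    exact absurd (funext fun j => (hv.1 j).symm.trans (hv.2 j)) h

theorem top_gi_disjListP_sortMec (i : Fin M) :
    LAEPCProv T Th (.gi .top T.one
      (disjListP ((Finset.univ.toList).map (sortMec K i)))) :=
  prov_gi_of_taut fun v _ => by
    rw [evalB_disjListP, List.any_eq_true]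
    exact ⟨_, List.mem_map_of_mem (Finset.mem_toList.2 (Finset.mem_univ fun j => v (.svar i j))),
      (evalB_sortMec v i _).2 fun _ => rfl⟩

theorem mec_gi_sortConj (g : Pattern M N) :
    LAEPCProv T Th (.gi (mec K g) T.one (sortConj g Finset.univ.toList)) :=
  prov_gi_of_taut fun v hv => (evalB_sortConj v g _).2 fun i _ j => (evalB_mec v g).1 hv ⟨i, j⟩

theorem sortConj_gi_mec (g : Pattern M N) :
    LAEPCProv T Th (.gi (sortConj g Finset.univ.toList) T.one (mec K g)) :=
  prov_gi_of_taut fun v hv => (evalB_mec v g).2 fun p =>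
    (evalB_sortConj v g _).1 hv p.1 (by simp) p.2

theorem sortConj_cons_gi (g : Pattern M N) (i : Fin M) (l : List (Fin M)) :
    LAEPCProv T Th
      (.gi (sortConj g (i :: l)) T.one ((sortMec K i (part g i)).and (sortConj g l))) :=
  prov_gi_of_taut fun v hv => by
    simp only [PExp.evalB, Bool.and_eq_true, evalB_sortConj, evalB_sortMec,
      List.forall_mem_cons] at hv ⊢
    exact ⟨hv.1, hv.2⟩

theorem gi_sortConj_cons (g : Pattern M N) (i : Fin M) (l : List (Fin M)) :
    LAEPCProv T Th
      (.gi ((sortMec K i (part g i)).and (sortConj g l)) T.one (sortConj g (i :: l))) :=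
  prov_gi_of_taut fun v hv => by
    simp only [PExp.evalB, Bool.and_eq_true, evalB_sortConj, evalB_sortMec,
      List.forall_mem_cons] at hv ⊢
    exact ⟨hv.1, hv.2⟩

def SortedIn (I : Set (Fin M)) (φ : PExp M N K) : Prop :=
  ¬φ.usesUnsorted ∧ ∀ i, φ.usesSort i → i ∈ I

lemma SortedIn.mono {I J : Set (Fin M)} {φ : PExp M N K} (h : SortedIn I φ) (hIJ : I ⊆ J) :
    SortedIn J φ :=
  ⟨h.1, fun i hi => hIJ (h.2 i hi)⟩

lemma sortedIn_top {I : Set (Fin M)} : SortedIn I (.top : PExp M N K) :=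
  ⟨id, fun _ => False.elim⟩

lemma SortedIn.and {I : Set (Fin M)} {φ ψ : PExp M N K} (hφ : SortedIn I φ)
    (hψ : SortedIn I ψ) : SortedIn I (φ.and ψ) :=
  ⟨fun h => h.elim hφ.1 hψ.1, fun i h => h.elim (hφ.2 i) (hψ.2 i)⟩

lemma sortedIn_and_iff {I : Set (Fin M)} {φ ψ : PExp M N K} :
    SortedIn I (φ.and ψ) ↔ SortedIn I φ ∧ SortedIn I ψ :=
  ⟨fun h => ⟨⟨fun hu => h.1 (.inl hu), fun i hi => h.2 i (.inl hi)⟩,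
    ⟨fun hu => h.1 (.inr hu), fun i hi => h.2 i (.inr hi)⟩⟩, fun h => h.1.and h.2⟩

lemma sortedIn_conjListP {I : Set (Fin M)} {l : List (PExp M N K)}
    (h : ∀ φ ∈ l, SortedIn I φ) : SortedIn I (conjListP l) := by
  induction l with
  | nil => exact sortedIn_top
  | cons φ r ih =>
    rcases r with _ | ⟨ψ, s⟩
    · exact h φ List.mem_cons_self
    · rw [conjListP_cons _ (List.cons_ne_nil _ _)]
      exact (h φ List.mem_cons_self).and (ih fun χ hχ => h χ (List.mem_cons_of_mem _ hχ))

lemma sortedIn_sliteral (p : (i : Fin M) × Fin (N i)) (b : Bool) :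
    SortedIn {p.1} (PExp.sliteral (K := K) p b) := by
  cases b <;> exact ⟨id, fun i h => by simp_all [PExp.sliteral, PExp.usesSort]⟩

lemma sortedIn_sortMec {i : Fin M} {f : Fin (N i) → Bool} :
    SortedIn {i} (sortMec K i f) :=
  sortedIn_conjListP fun φ hφ => by
    obtain ⟨j, -, rfl⟩ := List.mem_map.1 hφ
    exact sortedIn_sliteral _ _

lemma sortedIn_sortConj (g : Pattern M N) (l : List (Fin M)) :
    SortedIn {i | i ∈ l} (sortConj g l : PExp M N K) :=
  sortedIn_conjListP fun φ hφ => by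
    obtain ⟨i, hi, rfl⟩ := List.mem_map.1 hφ
    exact sortedIn_sortMec.mono (by simpa using hi)

lemma belongsTo_sortMec {i : Fin M} {f : Fin (N i) → Bool} : BelongsTo i (sortMec K i f) :=
  sortedIn_sortMec

lemma SortedIn.disjointSorted {I J : Set (Fin M)} {φ ψ : PExp M N K} (hφ : SortedIn I φ)
    (hψ : SortedIn J ψ) (hIJ : Disjoint I J) : DisjointSorted φ ψ :=
  ⟨hφ.1, hψ.1, fun i h => Set.disjoint_left.1 hIJ (hφ.2 i h.1) (hψ.2 i h.2)⟩

lemma disjointSorted_sortMec_sortConj {i : Fin M} {l : List (Fin M)} (hi : i ∉ l)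
    {f : Fin (N i) → Bool} (g : Pattern M N) :
    DisjointSorted (sortMec K i f) (sortConj g l : PExp M N K) :=
  sortedIn_sortMec.disjointSorted (sortedIn_sortConj g l) (Set.disjoint_singleton_left.2 hi)

lemma _root_.DisjointSorted.sortedIn_left {φ ψ : PExp M N K} (hd : DisjointSorted φ ψ) :
    SortedIn {i | φ.usesSort i} φ :=
  ⟨hd.1, fun _ h => h⟩

lemma _root_.DisjointSorted.sortedIn_right {φ ψ : PExp M N K} (hd : DisjointSorted φ ψ) :
    SortedIn {i | φ.usesSort i}ᶜ ψ :=
  ⟨hd.2.1, fun i h hφ => hd.2.2 i ⟨hφ, h⟩⟩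

lemma isDiamondConjP_dle (φ : PExp M N K) : IsDiamondConjP φ.dle :=
  ⟨[φ.dle], List.cons_ne_nil _ _, fun _ h => List.mem_singleton.1 h ▸ trivial, rfl⟩

lemma isDiamondConjP_dge (φ : PExp M N K) : IsDiamondConjP φ.dge :=
  ⟨[φ.dge], List.cons_ne_nil _ _, fun _ h => List.mem_singleton.1 h ▸ trivial, rfl⟩

end DerivedRules

section ProductOrder

variable {M : ℕ} {W : Fin M → Type} [∀ i, LinearOrder (W i)] {X Y : Set (∀ i, W i)}

lemma pDcl_empty (hM : 0 < M) : pDcl (∅ : Set (∀ i, W i)) = ∅ :=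
  Set.eq_empty_of_forall_notMem fun _ h => by simpa using h ⟨0, hM⟩

lemma pUcl_empty (hM : 0 < M) : pUcl (∅ : Set (∀ i, W i)) = ∅ :=
  Set.eq_empty_of_forall_notMem fun _ h => by simpa using h ⟨0, hM⟩

lemma subset_pDcl (X : Set (∀ i, W i)) : X ⊆ pDcl X := fun w hw _ => ⟨w, hw, le_rfl⟩

lemma subset_pUcl (X : Set (∀ i, W i)) : X ⊆ pUcl X := fun w hw _ => ⟨w, hw, le_rfl⟩

lemma pDcl_pDcl_subset (X : Set (∀ i, W i)) : pDcl (pDcl X) ⊆ pDcl X := fun _ hw i =>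
  let ⟨_, hv, hwv⟩ := hw i
  let ⟨u, hu, hvu⟩ := hv i
  ⟨u, hu, hwv.trans hvu⟩

lemma pUcl_pUcl_subset (X : Set (∀ i, W i)) : pUcl (pUcl X) ⊆ pUcl X := fun _ hw i =>
  let ⟨_, hv, hvw⟩ := hw i
  let ⟨u, hu, huv⟩ := hv i
  ⟨u, hu, huv.trans hvw⟩

lemma dependsOn_mem_pDcl {I : Set (Fin M)} (hX : DependsOn (· ∈ X) I) :
    DependsOn (· ∈ pDcl X) I := by
  have key : ∀ v w : ∀ i, W i, (∀ i ∈ I, v i = w i) → v ∈ pDcl X → w ∈ pDcl X := by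
    intro v w hvw hv l
    obtain ⟨x, hx, hle⟩ := hv l
    by_cases hl : l ∈ I
    · exact ⟨x, hx, hvw l hl ▸ hle⟩
    · exact ⟨_, hX.update_mem hx hl (w l), by rw [Function.update_self]⟩
  exact fun v w hvw => propext ⟨key v w hvw, key w v fun i hi => (hvw i hi).symm⟩

lemma dependsOn_mem_pUcl {I : Set (Fin M)} (hX : DependsOn (· ∈ X) I) :
    DependsOn (· ∈ pUcl X) I := by
  have key : ∀ v w : ∀ i, W i, (∀ i ∈ I, v i = w i) → v ∈ pUcl X → w ∈ pUcl X := by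
    intro v w hvw hv l
    obtain ⟨x, hx, hle⟩ := hv l
    by_cases hl : l ∈ I
    · exact ⟨x, hx, hvw l hl ▸ hle⟩
    · exact ⟨_, hX.update_mem hx hl (w l), by rw [Function.update_self]⟩
  exact fun v w hvw => propext ⟨key v w hvw, key w v fun i hi => (hvw i hi).symm⟩

lemma mem_pDcl_iff_of_dependsOn {i : Fin M} (hX : DependsOn (· ∈ X) {i}) {w : ∀ i, W i} :
    w ∈ pDcl X ↔ ∃ x ∈ X, w i ≤ x i := by
  refine ⟨fun h => h i, fun ⟨x, hx, hle⟩ l => ?_⟩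
  rcases eq_or_ne l i with rfl | hne
  · exact ⟨x, hx, hle⟩
  · exact ⟨_, hX.update_mem hx hne (w l), by rw [Function.update_self]⟩

lemma mem_pUcl_iff_of_dependsOn {i : Fin M} (hX : DependsOn (· ∈ X) {i}) {w : ∀ i, W i} :
    w ∈ pUcl X ↔ ∃ x ∈ X, x i ≤ w i := by
  refine ⟨fun h => h i, fun ⟨x, hx, hle⟩ l => ?_⟩
  rcases eq_or_ne l i with rfl | hne
  · exact ⟨x, hx, hle⟩
  · exact ⟨_, hX.update_mem hx hne (w l), by rw [Function.update_self]⟩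

lemma pDcl_subset_total {i : Fin M} (hX : DependsOn (· ∈ X) {i})
    (hY : DependsOn (· ∈ Y) {i}) : pDcl X ⊆ pDcl Y ∨ pDcl Y ⊆ pDcl X := by
  refine or_iff_not_imp_left.2 fun hXY u huY => ?_
  obtain ⟨w, hwX, hwY⟩ := Set.not_subset.1 hXY
  obtain ⟨y, hy, huy⟩ := (mem_pDcl_iff_of_dependsOn hY).1 huY
  obtain ⟨x, hx, hwx⟩ := (mem_pDcl_iff_of_dependsOn hX).1 hwX
  have hyw : y i ≤ w i :=
    le_of_not_ge fun h => hwY ((mem_pDcl_iff_of_dependsOn hY).2 ⟨y, hy, h⟩)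
  exact (mem_pDcl_iff_of_dependsOn hX).2 ⟨x, hx, huy.trans (hyw.trans hwx)⟩

lemma pUcl_subset_total {i : Fin M} (hX : DependsOn (· ∈ X) {i})
    (hY : DependsOn (· ∈ Y) {i}) : pUcl X ⊆ pUcl Y ∨ pUcl Y ⊆ pUcl X := by
  refine or_iff_not_imp_left.2 fun hXY u huY => ?_
  obtain ⟨w, hwX, hwY⟩ := Set.not_subset.1 hXY
  obtain ⟨y, hy, hyu⟩ := (mem_pUcl_iff_of_dependsOn hY).1 huY
  obtain ⟨x, hx, hxw⟩ := (mem_pUcl_iff_of_dependsOn hX).1 hwX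
  have hwy : w i ≤ y i :=
    le_of_not_ge fun h => hwY ((mem_pUcl_iff_of_dependsOn hY).2 ⟨y, hy, h⟩)
  exact (mem_pUcl_iff_of_dependsOn hX).2 ⟨x, hx, hxw.trans (hwy.trans hyu)⟩

lemma pDcl_inter_pUcl_subset {i : Fin M} (hX : DependsOn (· ∈ X) {i})
    (hXi : ∀ x ∈ X, ∀ y ∈ X, x i = y i) : pDcl X ∩ pUcl X ⊆ X := by
  rintro w ⟨hwD, hwU⟩
  obtain ⟨x, hx, hwx⟩ := (mem_pDcl_iff_of_dependsOn hX).1 hwD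
  obtain ⟨y, hy, hyw⟩ := (mem_pUcl_iff_of_dependsOn hX).1 hwU
  have hwi : w i = x i := le_antisymm hwx (hXi y hy x hx ▸ hyw)
  exact (hX (x := x) (y := w) (by simp [hwi])).mp hx

lemma pUcl_inter_pDcl_eq_empty {i : Fin M} (hX : DependsOn (· ∈ X) {i})
    (h : X ∩ pDcl Y = ∅) : pUcl X ∩ pDcl Y = ∅ := by
  refine Set.eq_empty_of_forall_notMem fun w ⟨hwU, hwD⟩ => ?_
  obtain ⟨x, hx, hxw⟩ := (mem_pUcl_iff_of_dependsOn hX).1 hwU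
  refine h.subset ⟨(hX (x := x) (y := Function.update w i (x i)) (by simp)).mp hx, fun l => ?_⟩
  obtain ⟨y, hy, hwy⟩ := hwD l
  rcases eq_or_ne l i with rfl | hne
  · exact ⟨y, hy, by simpa using hxw.trans hwy⟩
  · exact ⟨y, hy, by simpa [Function.update_of_ne hne] using hwy⟩

lemma pDcl_inter_pUcl_eq_empty {i : Fin M} (hX : DependsOn (· ∈ X) {i})
    (h : X ∩ pUcl Y = ∅) : pDcl X ∩ pUcl Y = ∅ := by
  refine Set.eq_empty_of_forall_notMem fun w ⟨hwD, hwU⟩ => ?_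
  obtain ⟨x, hx, hwx⟩ := (mem_pDcl_iff_of_dependsOn hX).1 hwD
  refine h.subset ⟨(hX (x := x) (y := Function.update w i (x i)) (by simp)).mp hx, fun l => ?_⟩
  obtain ⟨y, hy, hyw⟩ := hwU l
  rcases eq_or_ne l i with rfl | hne
  · exact ⟨y, hy, by simpa using hyw.trans hwx⟩
  · exact ⟨y, hy, by simpa [Function.update_of_ne hne] using hyw⟩

def IsCoordwiseConvex (R : Set (∀ i, W i)) : Prop :=
  ∀ a ∈ R, ∀ b ∈ R, ∀ t : ∀ i, W i, (∀ i, t i ∈ Set.uIcc (a i) (b i)) → t ∈ R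

lemma isCoordwiseConvex_pDcl (X : Set (∀ i, W i)) : IsCoordwiseConvex (pDcl X) := by
  intro a ha b hb t ht i
  rcases Set.mem_uIcc.1 (ht i) with ⟨-, hle⟩ | ⟨-, hle⟩
  · obtain ⟨x, hx, hbx⟩ := hb i
    exact ⟨x, hx, hle.trans hbx⟩
  · obtain ⟨x, hx, hax⟩ := ha i
    exact ⟨x, hx, hle.trans hax⟩

lemma isCoordwiseConvex_pUcl (X : Set (∀ i, W i)) : IsCoordwiseConvex (pUcl X) := by
  intro a ha b hb t ht i
  rcases Set.mem_uIcc.1 (ht i) with ⟨hge, -⟩ | ⟨hge, -⟩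
  · obtain ⟨x, hx, hxa⟩ := ha i
    exact ⟨x, hx, hxa.trans hge⟩
  · obtain ⟨x, hx, hxb⟩ := hb i
    exact ⟨x, hx, hxb.trans hge⟩

lemma piecewise_mem_pDcl {I : Set (Fin M)} [DecidablePred (· ∈ I)]
    {u w : ∀ i, W i} (hu : u ∈ pDcl X) (hw : w ∈ pDcl X) : I.piecewise u w ∈ pDcl X := by
  intro i
  by_cases hi : i ∈ I
  · simpa [Set.piecewise_eq_of_mem _ _ _ hi] using hu i
  · simpa [Set.piecewise_eq_of_notMem _ _ _ hi] using hw i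

lemma piecewise_mem_pUcl {I : Set (Fin M)} [DecidablePred (· ∈ I)]
    {u w : ∀ i, W i} (hu : u ∈ pUcl X) (hw : w ∈ pUcl X) : I.piecewise u w ∈ pUcl X := by
  intro i
  by_cases hi : i ∈ I
  · simpa [Set.piecewise_eq_of_mem _ _ _ hi] using hu i
  · simpa [Set.piecewise_eq_of_notMem _ _ _ hi] using hw i

end ProductOrder

section ProductSimilarity

variable {M : ℕ} {T : FiniteTNorm} {W : Fin M → Type} [∀ i, Fintype (W i)]
  [∀ i, Nonempty (W i)] [∀ i, LinearOrder (W i)] (hM : 0 < M)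
  (sps : ∀ i, TOSimilaritySpace T (W i)) {c : T.V} {X Y : Set (∀ i, W i)}

lemma le_prodS_iff {v w : ∀ i, W i} :
    (c : ℝ) ≤ prodS hM sps v w ↔ ∀ i, (c : ℝ) ≤ (sps i).S (v i) (w i) := by
  have : Nonempty (Fin M) := ⟨⟨0, hM⟩⟩
  simp only [prodS, Subtype.coe_le_coe, Finset.le_inf'_iff, Finset.mem_univ, true_implies]

lemma prodS_comm (v w : ∀ i, W i) : prodS hM sps v w = prodS hM sps w v := by
  simp only [prodS, (sps _).symm (v _)]

lemma le_prodS_self (w : ∀ i, W i) : (c : ℝ) ≤ prodS hM sps w w :=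
  (le_prodS_iff hM sps).2 fun i => (sps i).le_S_self (w i)

lemma pNbhd_one (X : Set (∀ i, W i)) : pNbhd hM sps T.one X = X := by
  refine Set.Subset.antisymm (fun w ⟨a, ha, h⟩ => ?_)
    fun w hw => ⟨w, hw, le_prodS_self hM sps w⟩
  have hwa : w = a := funext fun i => ((sps i).eq_one_iff _ _).1 <|
    Subtype.ext (le_antisymm (coe_le_one _) ((le_prodS_iff hM sps).1 h i))
  exact hwa ▸ ha

lemma pNbhd_empty : pNbhd hM sps c (∅ : Set (∀ i, W i)) = ∅ := by
  simp [pNbhd]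

lemma pNbhd_mono (h : X ⊆ Y) : pNbhd hM sps c X ⊆ pNbhd hM sps c Y :=
  fun _ ⟨a, ha, hc⟩ => ⟨a, h ha, hc⟩

lemma pNbhd_anti {d : T.V} (h : (d : ℝ) ≤ c) (X : Set (∀ i, W i)) :
    pNbhd hM sps c X ⊆ pNbhd hM sps d X :=
  fun _ ⟨a, ha, hc⟩ => ⟨a, ha, h.trans hc⟩

lemma pNbhd_union (X Y : Set (∀ i, W i)) :
    pNbhd hM sps c (X ∪ Y) = pNbhd hM sps c X ∪ pNbhd hM sps c Y := by
  ext w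
  simp only [pNbhd, Set.mem_union, Set.mem_ofPred_eq, or_and_right, exists_or]

lemma pNbhd_pNbhd_subset {d : T.V} (X : Set (∀ i, W i)) :
    pNbhd hM sps c (pNbhd hM sps d X) ⊆ pNbhd hM sps (T.op c d) X := by
  rintro w ⟨a, ⟨b, hb, hd⟩, hc⟩
  refine ⟨b, hb, (le_prodS_iff hM sps).2 fun i => ?_⟩
  exact (T.op_mono _ _ _ _ ((le_prodS_iff hM sps).1 hc i) ((le_prodS_iff hM sps).1 hd i)).trans
    ((sps i).triangle _ _ _)

lemma pNbhd_zero (h : X.Nonempty) : pNbhd hM sps T.zero X = Set.univ := by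
  obtain ⟨a, ha⟩ := h
  exact Set.eq_univ_of_forall fun w => ⟨a, ha, (le_prodS_iff hM sps).2 fun _ => zero_le_coe _⟩

lemma pDcl_subset_pNbhd_pDcl (h : X ⊆ pNbhd hM sps c Y) :
    pDcl X ⊆ pNbhd hM sps c (pDcl Y) := by
  intro w hw
  choose v hv hwv using hw
  choose b hb hvb using fun i => h (hv i)
  choose t htb htw using fun i => (sps i).exists_le_le_S (hwv i) ((le_prodS_iff hM sps).1 (hvb i) i)
  exact ⟨t, fun i => ⟨b i, hb i, htb i⟩, (le_prodS_iff hM sps).2 htw⟩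

lemma pUcl_subset_pNbhd_pUcl (h : X ⊆ pNbhd hM sps c Y) :
    pUcl X ⊆ pNbhd hM sps c (pUcl Y) := by
  intro w hw
  choose v hv hvw using hw
  choose b hb hvb using fun i => h (hv i)
  choose t hbt htw using fun i => (sps i).exists_ge_le_S (hvw i) ((le_prodS_iff hM sps).1 (hvb i) i)
  exact ⟨t, fun i => ⟨b i, hb i, hbt i⟩, (le_prodS_iff hM sps).2 htw⟩

lemma subset_pNbhd_inter {R S : Set (∀ i, W i)} (hR : IsCoordwiseConvex R)
    (hS : IsCoordwiseConvex S) (hRS : (R ∩ S).Nonempty) (hXR : X ⊆ pNbhd hM sps c R)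
    (hXS : X ⊆ pNbhd hM sps c S) : X ⊆ pNbhd hM sps c (R ∩ S) := by
  obtain ⟨x, hxR, hxS⟩ := hRS
  intro w hw
  obtain ⟨r, hr, hwr⟩ := hXR hw
  obtain ⟨s, hs, hws⟩ := hXS hw
  choose t htr hts hwt using fun i => (sps i).exists_mem_uIcc_le_S
    ((le_prodS_iff hM sps).1 hwr i) ((le_prodS_iff hM sps).1 hws i) (x i)
  exact ⟨t, ⟨hR r hr x hxR t htr, hS s hs x hxS t hts⟩, (le_prodS_iff hM sps).2 hwt⟩

lemma inter_subset_pNbhd_inter {I : Set (Fin M)} [DecidablePred (· ∈ I)]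
    {X' Y' : Set (∀ i, W i)} (hY : DependsOn (· ∈ Y) I) (hY' : DependsOn (· ∈ Y') Iᶜ)
    (h : X ⊆ pNbhd hM sps c Y) (h' : X' ⊆ pNbhd hM sps c Y') :
    X ∩ X' ⊆ pNbhd hM sps c (Y ∩ Y') := by
  rintro w ⟨hw, hw'⟩
  obtain ⟨b, hb, hwb⟩ := h hw
  obtain ⟨b', hb', hwb'⟩ := h' hw'
  refine ⟨I.piecewise b b', ⟨hY.piecewise_mem hb b', hY'.piecewise_mem_of_compl hb' b⟩,
    (le_prodS_iff hM sps).2 fun i => ?_⟩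
  by_cases hi : i ∈ I
  · simpa [Set.piecewise_eq_of_mem _ _ _ hi] using (le_prodS_iff hM sps).1 hwb i
  · simpa [Set.piecewise_eq_of_notMem _ _ _ hi] using (le_prodS_iff hM sps).1 hwb' i

lemma subset_pNbhd_of_inter_subset {I : Set (Fin M)} [DecidablePred (· ∈ I)]
    {X' Y' : Set (∀ i, W i)} (hX : DependsOn (· ∈ X) I) (hY : DependsOn (· ∈ Y) I)
    (hX' : DependsOn (· ∈ X') Iᶜ) (hX'ne : X'.Nonempty)
    (h : X ∩ X' ⊆ pNbhd hM sps c (Y ∩ Y')) : X ⊆ pNbhd hM sps c Y := by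
  obtain ⟨z, hz⟩ := hX'ne
  intro w hw
  obtain ⟨u, hu, hwu⟩ := h ⟨hX.piecewise_mem hw z, hX'.piecewise_mem_of_compl hz w⟩
  refine ⟨I.piecewise u w, hY.piecewise_mem hu.1 w, (le_prodS_iff hM sps).2 fun i => ?_⟩
  by_cases hi : i ∈ I
  · simpa [Set.piecewise_eq_of_mem _ _ _ hi] using (le_prodS_iff hM sps).1 hwu i
  · simpa [Set.piecewise_eq_of_notMem _ _ _ hi] using (sps i).le_S_self (w i)

end ProductSimilarity

section Evaluation

variable {M : ℕ} {N : Fin M → ℕ} {K : ℕ} {W : Fin M → Type} [∀ i, Fintype (W i)]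
  [∀ i, Nonempty (W i)] [∀ i, LinearOrder (W i)] (ev : LAEPCEval M N K W)

lemma dependsOn_mem_e {I : Set (Fin M)} {φ : PExp M N K} (h : SortedIn I φ) :
    DependsOn (· ∈ ev.e φ) I := by
  induction φ with
  | svar i j =>
    obtain ⟨A, hA⟩ := ev.svar_cyl i j
    intro v w hvw
    simp only [hA, cyl, Set.mem_ofPred_eq, hvw i (h.2 i rfl)]
  | uvar => exact absurd trivial h.1
  | bot => exact fun _ _ _ => by simp [ev.map_bot]
  | top => exact fun _ _ _ => by simp [ev.map_top]
  | and φ ψ ihφ ihψ =>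
    rw [ev.map_and]
    exact (ihφ ⟨fun hu => h.1 (.inl hu), fun i hi => h.2 i (.inl hi)⟩).mem_inter
      (ihψ ⟨fun hu => h.1 (.inr hu), fun i hi => h.2 i (.inr hi)⟩)
  | or φ ψ ihφ ihψ =>
    rw [ev.map_or]
    exact (ihφ ⟨fun hu => h.1 (.inl hu), fun i hi => h.2 i (.inl hi)⟩).mem_union
      (ihψ ⟨fun hu => h.1 (.inr hu), fun i hi => h.2 i (.inr hi)⟩)
  | not φ ih => rw [ev.map_not]; exact (ih h).mem_compl
  | dle φ ih => rw [ev.map_dle]; exact dependsOn_mem_pDcl (ih h)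
  | dge φ ih => rw [ev.map_dge]; exact dependsOn_mem_pUcl (ih h)

open Classical in
lemma mem_e_substP (σ : ℕ → PExp M N K) (w : ∀ i, W i) (χ : PropForm) :
    w ∈ ev.e (χ.substP σ) ↔ χ.beval (fun n => decide (w ∈ ev.e (σ n))) = true := by
  induction χ with
  | var n => simp [PropForm.substP, PropForm.beval]
  | bot => simp [PropForm.substP, PropForm.beval, ev.map_bot]
  | top => simp [PropForm.substP, PropForm.beval, ev.map_top]
  | and α β ihα ihβ => simp [PropForm.substP, PropForm.beval, ev.map_and, ihα, ihβ]
  | or α β ihα ihβ => simp [PropForm.substP, PropForm.beval, ev.map_or, ihα, ihβ]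
  | not α ih => simp [PropForm.substP, PropForm.beval, ev.map_not, ih]

lemma mem_e_conjListP (l : List (PExp M N K)) (w : ∀ i, W i) :
    w ∈ ev.e (conjListP l) ↔ ∀ φ ∈ l, w ∈ ev.e φ := by
  induction l with
  | nil => simp [conjListP, ev.map_top]
  | cons φ r ih =>
    rcases r with _ | ⟨ψ, s⟩
    · simp [conjListP]
    · rw [conjListP_cons _ (List.cons_ne_nil _ _), ev.map_and, Set.mem_inter_iff, ih]
      simp only [List.forall_mem_cons]

lemma mem_e_sliteral {w : ∀ i, W i} (p : (i : Fin M) × Fin (N i)) (b : Bool) :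
    w ∈ ev.e (PExp.sliteral p b) ↔ (w ∈ ev.e (.svar p.1 p.2) ↔ b = true) := by
  cases b <;> simp [PExp.sliteral, ev.map_not]

/-- The unsorted variables are Boolean combinations of the sorted ones, so these alone
separate worlds. -/
lemma eq_of_forall_mem_svar_iff {v w : ∀ i, W i}
    (h : ∀ p : (i : Fin M) × Fin (N i),
      v ∈ ev.e (.svar p.1 p.2) ↔ w ∈ ev.e (.svar p.1 p.2)) :
    v = w := by
  have huvar (k : Fin K) : v ∈ ev.e (.uvar k) ↔ w ∈ ev.e (.uvar k) := by
    obtain ⟨G, hG⟩ := ev.uvar_alg k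
    have hlit (g : (i : Fin M) × Fin (N i) → Bool) (p : (i : Fin M) × Fin (N i)) :
        (v ∈ if g p then ev.e (.svar p.1 p.2) else (ev.e (.svar p.1 p.2))ᶜ) ↔
          (w ∈ if g p then ev.e (.svar p.1 p.2) else (ev.e (.svar p.1 p.2))ᶜ) := by
      split <;> simp [h p]
    simp only [hG, Set.mem_iUnion, Set.mem_iInter, hlit]
  by_contra hne
  rcases ev.separating v w hne with ⟨i, j, hx⟩ | ⟨k, hx⟩
  · exact (xor_iff_not_iff _ _).1 hx (h ⟨i, j⟩)
  · exact (xor_iff_not_iff _ _).1 hx (huvar k)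

lemma subsingleton_e_of_isMecP {ε : PExp M N K} (hε : IsMecP ε) : (ev.e ε).Subsingleton := by
  obtain ⟨l, f, -, hl, rfl⟩ := hε
  intro v hv w hw
  refine eq_of_forall_mem_svar_iff ev fun p => ?_
  have hp := List.mem_map_of_mem (f := fun p => PExp.sliteral (K := K) p (f p)) (hl p)
  rw [(mem_e_sliteral ev p (f p)).1 ((mem_e_conjListP ev _ v).1 hv _ hp),
    (mem_e_sliteral ev p (f p)).1 ((mem_e_conjListP ev _ w).1 hw _ hp)]

lemma exists_dependsOn_of_isOneSortedMecP {ε : PExp M N K} (hε : IsOneSortedMecP ε) :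
    ∃ i, DependsOn (· ∈ ev.e ε) {i} ∧ ∀ x ∈ ev.e ε, ∀ y ∈ ev.e ε, x i = y i := by
  obtain ⟨i, l, f, -, hl, rfl⟩ := hε
  set ε := conjListP (l.map fun j => PExp.sliteral (K := K) ⟨i, j⟩ (f j))
  have hdep : DependsOn (· ∈ ev.e ε) {i} :=
    dependsOn_mem_e ev (sortedIn_conjListP fun φ hφ => by
      obtain ⟨j, -, rfl⟩ := List.mem_map.1 hφ
      exact sortedIn_sliteral _ _)
  refine ⟨i, hdep, fun x hx y hy => ?_⟩
  have hmem (z) (hz : z ∈ ev.e ε) (j) : z ∈ ev.e (.svar i j) ↔ f j = true :=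
    (mem_e_sliteral ev ⟨i, j⟩ (f j)).1
      ((mem_e_conjListP ev _ z).1 hz _ (List.mem_map_of_mem (hl j)))
  have hy' : Function.update x i (y i) ∈ _ := (hdep (x := y) (by simp)).mp hy
  suffices x = Function.update x i (y i) by rw [this, Function.update_self]
  refine eq_of_forall_mem_svar_iff ev fun ⟨i', j⟩ => ?_
  rcases eq_or_ne i' i with rfl | hne
  · rw [hmem x hx j, hmem _ hy' j]
  · exact propext_iff.1 (dependsOn_mem_e ev (I := {i'}) (φ := .svar i' j)
      ⟨id, fun _ h => Eq.symm h⟩ (by simp [Function.update_of_ne hne]))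

lemma isCoordwiseConvex_e_of_isDiamondConjP {ρ : PExp M N K} (hρ : IsDiamondConjP ρ) :
    IsCoordwiseConvex (ev.e ρ) := by
  obtain ⟨l, -, hl, rfl⟩ := hρ
  intro a ha b hb t ht
  rw [mem_e_conjListP] at ha hb ⊢
  intro χ hχ
  match χ, hl χ hχ with
  | .dle φ, _ =>
    have ha' := ha _ hχ
    have hb' := hb _ hχ
    rw [ev.map_dle] at ha' hb' ⊢
    exact isCoordwiseConvex_pDcl _ a ha' b hb' t ht
  | .dge φ, _ =>
    have ha' := ha _ hχ
    have hb' := hb _ hχ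
    rw [ev.map_dge] at ha' hb' ⊢
    exact isCoordwiseConvex_pUcl _ a ha' b hb' t ht

end Evaluation

section Soundness

variable {M : ℕ} {N : Fin M → ℕ} {K : ℕ} {T : FiniteTNorm} {W : Fin M → Type}
  [∀ i, Fintype (W i)] [∀ i, Nonempty (W i)] [∀ i, LinearOrder (W i)]
  (hM : 0 < M) (sps : ∀ i, TOSimilaritySpace T (W i)) (ev : LAEPCEval M N K W)
  {φ ψ : PExp M N K} {c : T.V} {Φ Ψ : PFml M N K T.V}

lemma sat_gi : LAEPCSat hM sps ev (.gi φ c ψ) ↔ ev.e φ ⊆ pNbhd hM sps c (ev.e ψ) := Iff.rfl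

lemma sat_and :
    LAEPCSat hM sps ev (Φ.and Ψ) ↔ LAEPCSat hM sps ev Φ ∧ LAEPCSat hM sps ev Ψ :=
  Iff.rfl

lemma sat_or :
    LAEPCSat hM sps ev (Φ.or Ψ) ↔ LAEPCSat hM sps ev Φ ∨ LAEPCSat hM sps ev Ψ :=
  Iff.rfl

lemma sat_not : LAEPCSat hM sps ev Φ.not ↔ ¬LAEPCSat hM sps ev Φ := Iff.rfl

lemma sat_imp :
    LAEPCSat hM sps ev (Φ.imp Ψ) ↔ (LAEPCSat hM sps ev Φ → LAEPCSat hM sps ev Ψ) :=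
  imp_iff_not_or.symm

lemma sat_gi_one : LAEPCSat hM sps ev (.gi φ T.one ψ) ↔ ev.e φ ⊆ ev.e ψ := by
  rw [sat_gi, pNbhd_one]

lemma sat_gi_bot : LAEPCSat hM sps ev (.gi φ c .bot) ↔ ev.e φ = ∅ := by
  rw [sat_gi, ev.map_bot, pNbhd_empty, Set.subset_empty_iff]

lemma sat_of_peval (h : ∀ g, Φ.peval g = true) : LAEPCSat hM sps ev Φ := by
  classical
  let g : PExp M N K → T.V → PExp M N K → Bool :=
    fun φ c ψ => LAEPCSat hM sps ev (.gi φ c ψ)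
  have key (Ψ : PFml M N K T.V) : LAEPCSat hM sps ev Ψ ↔ Ψ.peval g = true := by
    induction Ψ with
    | gi => simp [PFml.peval, g]
    | and _ _ ih₁ ih₂ => simp [sat_and, PFml.peval, ih₁, ih₂]
    | or _ _ ih₁ ih₂ => simp [sat_or, PFml.peval, ih₁, ih₂]
    | not _ ih => simp [sat_not, PFml.peval, ih]
  exact (key Φ).2 (h g)

lemma sat_gi_of_isMecP {ε : PExp M N K} (hε : IsMecP ε) {d : ∀ i, W i} (hd : d ∈ ev.e ε)
    (h : d ∈ pNbhd hM sps c (ev.e φ)) : LAEPCSat hM sps ev (.gi ε c φ) :=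
  fun _ hw => subsingleton_e_of_isMecP ev hε hw hd ▸ h

lemma sat_a6 {δ ε : PExp M N K} (hε : IsMecP ε) (hδ : (ev.e δ).Nonempty)
    (h : LAEPCSat hM sps ev (.gi δ c ε)) : LAEPCSat hM sps ev (.gi ε c δ) := by
  obtain ⟨d, hd⟩ := hδ
  obtain ⟨b, hb, hdb⟩ := h hd
  exact sat_gi_of_isMecP hM sps ev hε hb ⟨d, hd, prodS_comm hM sps b d ▸ hdb⟩

lemma sat_a8 {ε : PExp M N K} (hε : IsMecP ε) (h : LAEPCSat hM sps ev (.gi ε c (φ.or ψ))) :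
    LAEPCSat hM sps ev (.gi ε c φ) ∨ LAEPCSat hM sps ev (.gi ε c ψ) := by
  rcases (ev.e ε).eq_empty_or_nonempty with he | ⟨d, hd⟩
  · exact .inl (by simp [sat_gi, he])
  · have hd' := h hd
    rw [ev.map_or, pNbhd_union] at hd'
    exact hd'.imp (sat_gi_of_isMecP hM sps ev hε hd) (sat_gi_of_isMecP hM sps ev hε hd)

lemma sat_a20 {φ' ψ' : PExp M N K} (hd : DisjointSorted (φ.and ψ) (φ'.and ψ'))
    (hne : (ev.e (φ.and φ')).Nonempty) :
    LAEPCSat hM sps ev ((PFml.gi φ c ψ).and (.gi φ' c ψ')) ↔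
      LAEPCSat hM sps ev (.gi (φ.and φ') c (ψ.and ψ')) := by
  classical
  obtain ⟨hφ, hψ⟩ := sortedIn_and_iff.1 hd.sortedIn_left
  obtain ⟨hφ', hψ'⟩ := sortedIn_and_iff.1 hd.sortedIn_right
  rw [ev.map_and] at hne
  obtain ⟨z, hz, hz'⟩ := hne
  simp only [sat_and, sat_gi, ev.map_and]
  refine ⟨fun ⟨h, h'⟩ => inter_subset_pNbhd_inter hM sps (dependsOn_mem_e ev hψ)
    (dependsOn_mem_e ev hψ') h h', fun h => ⟨?_, ?_⟩⟩
  · exact subset_pNbhd_of_inter_subset hM sps (dependsOn_mem_e ev hφ) (dependsOn_mem_e ev hψ)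
      (dependsOn_mem_e ev hφ') ⟨z, hz'⟩ h
  · refine subset_pNbhd_of_inter_subset hM sps (Y' := ev.e ψ) (dependsOn_mem_e ev hφ')
      (dependsOn_mem_e ev hψ')
      (dependsOn_mem_e ev (by rwa [compl_compl])) ⟨z, hz⟩ ?_
    rwa [Set.inter_comm, Set.inter_comm (ev.e ψ')]

lemma sat_a22 {ε : PExp M N K} (k : Fin K) (hε : IsMecP ε) :
    LAEPCSat hM sps ev (.gi ε T.one (.uvar k)) ∨
      LAEPCSat hM sps ev (.gi ε T.one (.not (.uvar k))) := by
  rcases (ev.e ε).eq_empty_or_nonempty with he | ⟨d, hd⟩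
  · exact .inl (by simp [sat_gi, he])
  · simp only [sat_gi_one, ev.map_not]
    by_cases hdk : d ∈ ev.e (.uvar k)
    · exact .inl fun w hw => subsingleton_e_of_isMecP ev hε hw hd ▸ hdk
    · exact .inr fun w hw => subsingleton_e_of_isMecP ev hε hw hd ▸ hdk

theorem sat_of_prov {Th : Set (PFml M N K T.V)} (hTh : ∀ Ψ ∈ Th, LAEPCSat hM sps ev Ψ)
    (h : LAEPCProv T Th Φ) : LAEPCSat hM sps ev Φ := by
  classical
  induction h with
  | hyp h => exact hTh _ h
  | mp _ _ ih₁ ih₂ => exact (sat_imp hM sps ev).1 ih₂ ih₁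
  | a1' h =>
    obtain ⟨φ', ψ', σ, himp, rfl, rfl⟩ := h
    exact (sat_gi_one hM sps ev).2 fun w hw =>
      (mem_e_substP ev σ w _).2 (himp _ ((mem_e_substP ev σ w _).1 hw))
  | a2 =>
    rw [sat_imp, sat_gi_one, sat_gi_bot, ev.map_and, ev.map_not, ← Set.sdiff_eq]
    exact Set.sdiff_eq_empty.2
  | a3 _ _ hdc => exact (sat_imp hM sps ev).2 fun h => h.trans (pNbhd_anti hM sps hdc _)
  | a4 =>
    rw [sat_imp, sat_not, sat_gi_bot, sat_gi]
    exact fun h => by simp [pNbhd_zero hM sps (Set.nonempty_iff_ne_empty.2 h)]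
  | a5 => simp only [sat_imp, sat_gi_bot, imp_self]
  | a6 c _ hε =>
    refine (sat_imp hM sps ev).2 fun ⟨h₁, h₂⟩ => sat_a6 hM sps ev hε ?_ h₂
    rw [sat_not, sat_gi_bot] at h₁
    exact Set.nonempty_iff_ne_empty.2 h₁
  | a7 =>
    refine (sat_imp hM sps ev).2 fun ⟨h₁, h₂⟩ => ?_
    rw [sat_gi, ev.map_or]
    exact Set.union_subset h₁ h₂
  | a8 _ _ _ hε => exact (sat_imp hM sps ev).2 (sat_a8 hM sps ev hε)
  | a9 => exact (sat_imp hM sps ev).2 fun ⟨h₁, h₂⟩ _ hw =>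
      pNbhd_pNbhd_subset hM sps _ (pNbhd_mono hM sps h₂ (h₁ hw))
  | a10 =>
    rw [sat_not, sat_gi_bot, ev.map_top]
    exact Set.univ_nonempty.ne_empty
  | a11 h => exact sat_of_peval hM sps ev h
  | a12a => rw [sat_gi_one, ev.map_dle]; exact subset_pDcl _
  | a12b => rw [sat_gi_one, ev.map_dge]; exact subset_pUcl _
  | a13a => rw [sat_gi_one, ev.map_dle, ev.map_dle]; exact pDcl_pDcl_subset _
  | a13b => rw [sat_gi_one, ev.map_dge, ev.map_dge]; exact pUcl_pUcl_subset _
  | a14a => rw [sat_gi_bot, ev.map_dle, ev.map_bot]; exact pDcl_empty hM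
  | a14b => rw [sat_gi_bot, ev.map_dge, ev.map_bot]; exact pUcl_empty hM
  | a15a hs =>
    obtain ⟨i, hφ, hψ⟩ := hs
    simp only [sat_or, sat_gi_one, ev.map_dle]
    exact pDcl_subset_total (dependsOn_mem_e ev hφ) (dependsOn_mem_e ev hψ)
  | a15b hs =>
    obtain ⟨i, hφ, hψ⟩ := hs
    simp only [sat_or, sat_gi_one, ev.map_dge]
    exact pUcl_subset_total (dependsOn_mem_e ev hφ) (dependsOn_mem_e ev hψ)
  | a16 hε =>
    obtain ⟨i, hdep, hi⟩ := exists_dependsOn_of_isOneSortedMecP ev hε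
    rw [sat_gi_one, ev.map_and, ev.map_dle, ev.map_dge]
    exact pDcl_inter_pUcl_subset hdep hi
  | a17a =>
    rw [sat_imp, sat_gi, sat_gi, ev.map_dle, ev.map_dle]
    exact pDcl_subset_pNbhd_pDcl hM sps
  | a17b =>
    rw [sat_imp, sat_gi, sat_gi, ev.map_dge, ev.map_dge]
    exact pUcl_subset_pNbhd_pUcl hM sps
  | a18a _ hs =>
    obtain ⟨i, hφ⟩ := hs
    rw [sat_imp, sat_gi_bot, sat_gi_bot, ev.map_and, ev.map_and, ev.map_dle, ev.map_dge]
    exact pUcl_inter_pDcl_eq_empty (dependsOn_mem_e ev hφ)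
  | a18b _ hs =>
    obtain ⟨i, hφ⟩ := hs
    rw [sat_imp, sat_gi_bot, sat_gi_bot, ev.map_and, ev.map_and, ev.map_dge, ev.map_dle]
    exact pDcl_inter_pUcl_eq_empty (dependsOn_mem_e ev hφ)
  | a19 _ _ hρ hσ =>
    refine (sat_imp hM sps ev).2 fun ⟨⟨h₀, h₁⟩, h₂⟩ => ?_
    rw [sat_not, sat_gi_bot, ev.map_and] at h₀
    rw [sat_gi, ev.map_and]
    exact subset_pNbhd_inter hM sps (isCoordwiseConvex_e_of_isDiamondConjP ev hρ)
      (isCoordwiseConvex_e_of_isDiamondConjP ev hσ) (Set.nonempty_iff_ne_empty.2 h₀) h₁ h₂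
  | a20 c hd =>
    refine (sat_imp hM sps ev).2 fun h₀ => ?_
    rw [sat_not, sat_gi_bot] at h₀
    have := sat_a20 hM sps ev (c := c) hd (Set.nonempty_iff_ne_empty.2 h₀)
    simp only [PFml.iff, sat_and, sat_imp]
    exact ⟨this.1, this.2⟩
  | a21a _ hd =>
    rw [sat_imp, sat_or, sat_gi_bot, sat_gi_bot, sat_gi_bot, ev.map_and, ev.map_and,
      ev.map_and, ev.map_dge]
    exact (dependsOn_mem_e ev hd.sortedIn_left).inter_inter_eq_empty
      (dependsOn_mem_e ev hd.sortedIn_right) fun _ hu _ hw => piecewise_mem_pUcl hu hw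
  | a21b _ hd =>
    rw [sat_imp, sat_or, sat_gi_bot, sat_gi_bot, sat_gi_bot, ev.map_and, ev.map_and,
      ev.map_and, ev.map_dle]
    exact (dependsOn_mem_e ev hd.sortedIn_left).inter_inter_eq_empty
      (dependsOn_mem_e ev hd.sortedIn_right) fun _ hu _ hw => piecewise_mem_pDcl hu hw
  | a22 k hε => exact sat_a22 hM sps ev k hε

end Soundness

section Deduction

variable {M : ℕ} {N : Fin M → ℕ} {K : ℕ} {T : FiniteTNorm} {Th : Set (PFml M N K T.V)}

theorem prov_induction {P : PFml M N K T.V → Prop} (hyp : ∀ Φ ∈ Th, P Φ)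
    (ax : ∀ Φ, (∀ Th' : Set (PFml M N K T.V), LAEPCProv T Th' Φ) → P Φ)
    (mp : ∀ Φ Ψ, P Φ → P (Φ.imp Ψ) → P Ψ) {Φ : PFml M N K T.V}
    (h : LAEPCProv T Th Φ) : P Φ := by
  induction h with
  | hyp h => exact hyp _ h
  | mp _ _ ih₁ ih₂ => exact mp _ _ ih₁ ih₂
  | a1' h => exact ax _ fun _ => .a1' h
  | a2 φ ψ => exact ax _ fun _ => .a2 φ ψ
  | a3 φ ψ h => exact ax _ fun _ => .a3 φ ψ h
  | a4 φ ψ => exact ax _ fun _ => .a4 φ ψ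
  | a5 φ c => exact ax _ fun _ => .a5 φ c
  | a6 c hδ hε => exact ax _ fun _ => .a6 c hδ hε
  | a7 φ ψ χ c => exact ax _ fun _ => .a7 φ ψ χ c
  | a8 φ ψ c hε => exact ax _ fun _ => .a8 φ ψ c hε
  | a9 φ ψ χ c d => exact ax _ fun _ => .a9 φ ψ χ c d
  | a10 => exact ax _ fun _ => .a10
  | a11 h => exact ax _ fun _ => .a11 h
  | a12a φ => exact ax _ fun _ => .a12a φ
  | a12b φ => exact ax _ fun _ => .a12b φ
  | a13a φ => exact ax _ fun _ => .a13a φ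
  | a13b φ => exact ax _ fun _ => .a13b φ
  | a14a => exact ax _ fun _ => .a14a
  | a14b => exact ax _ fun _ => .a14b
  | a15a hs => exact ax _ fun _ => .a15a hs
  | a15b hs => exact ax _ fun _ => .a15b hs
  | a16 hε => exact ax _ fun _ => .a16 hε
  | a17a φ ψ c => exact ax _ fun _ => .a17a φ ψ c
  | a17b φ ψ c => exact ax _ fun _ => .a17b φ ψ c
  | a18a ψ hs => exact ax _ fun _ => .a18a ψ hs
  | a18b ψ hs => exact ax _ fun _ => .a18b ψ hs
  | a19 φ c hρ hσ => exact ax _ fun _ => .a19 φ c hρ hσ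
  | a20 c hd => exact ax _ fun _ => .a20 c hd
  | a21a φ hd => exact ax _ fun _ => .a21a φ hd
  | a21b φ hd => exact ax _ fun _ => .a21b φ hd
  | a22 k hε => exact ax _ fun _ => .a22 k hε

theorem prov_mono {Th' : Set (PFml M N K T.V)} (hTh : Th ⊆ Th') {Φ : PFml M N K T.V}
    (h : LAEPCProv T Th Φ) : LAEPCProv T Th' Φ :=
  prov_induction (fun _ hΦ => .hyp (hTh hΦ)) (fun _ hΦ => hΦ Th') (fun _ _ => .mp) h

theorem exists_finite_prov {Φ : PFml M N K T.V} (h : LAEPCProv T Th Φ) :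
    ∃ s ⊆ Th, s.Finite ∧ LAEPCProv T s Φ :=
  prov_induction (P := fun Φ => ∃ s ⊆ Th, s.Finite ∧ LAEPCProv T s Φ)
    (fun Φ hΦ => ⟨{Φ}, Set.singleton_subset_iff.2 hΦ, Set.finite_singleton Φ, .hyp rfl⟩)
    (fun _ hΦ => ⟨∅, Set.empty_subset _, Set.finite_empty, hΦ ∅⟩)
    (fun _ _ ⟨s₁, hs₁, hf₁, h₁⟩ ⟨s₂, hs₂, hf₂, h₂⟩ => ⟨s₁ ∪ s₂, Set.union_subset hs₁ hs₂,
      hf₁.union hf₂, (prov_mono Set.subset_union_left h₁).mp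
        (prov_mono Set.subset_union_right h₂)⟩)
    h

theorem prov_imp_of_prov_insert {Ψ Φ : PFml M N K T.V} (h : LAEPCProv T (insert Ψ Th) Φ) :
    LAEPCProv T Th (Ψ.imp Φ) := by
  have imp_intro {X : PFml M N K T.V} (hX : LAEPCProv T Th X) : LAEPCProv T Th (Ψ.imp X) :=
    prov_of_peval (fun g hg => by simp [peval_imp, hg]) hX
  refine prov_induction (fun X hX => ?_) (fun X hX => imp_intro (hX Th)) (fun X Y hX hXY => ?_) h
  · rcases hX with rfl | hX
    · exact .a11 fun g => by simp [peval_imp, Bool.not_or_self]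
    · exact imp_intro (.hyp hX)
  · refine prov_of_peval₂ (fun g h₁ h₂ => ?_) hX hXY
    simp only [peval_imp, Bool.or_eq_true, Bool.not_eq_true'] at h₁ h₂ ⊢
    cases hΨ : Ψ.peval g <;> simp_all

def falsum (T : FiniteTNorm) : PFml M N K T.V := .gi .top T.one .bot

theorem prov_of_prov_not_imp_falsum {Φ : PFml M N K T.V}
    (h : LAEPCProv T Th (Φ.not.imp (falsum T))) : LAEPCProv T Th Φ :=
  prov_of_peval₂ (fun g h₁ h₂ => by
    simp only [peval_imp, falsum, PFml.peval, Bool.not_not, Bool.or_eq_true,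
      Bool.not_eq_true'] at h₁ h₂
    simp_all) h .a10

structure IsMaxConsistent (T : FiniteTNorm) (Δ : Set (PFml M N K T.V)) : Prop where
  consistent : ¬LAEPCProv T Δ (falsum T)
  complete : ∀ Ψ, ¬LAEPCProv T Δ Ψ → LAEPCProv T Δ Ψ.not

theorem isOfFiniteCharacter_consistent :
    Order.IsOfFiniteCharacter {Th : Set (PFml M N K T.V) | ¬LAEPCProv T Th (falsum T)} := by
  refine fun Th => ⟨fun hTh s hs _ hprov => hTh (prov_mono hs hprov), fun h hprov => ?_⟩
  obtain ⟨s, hs, hfin, hprov⟩ := exists_finite_prov hprov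
  exact h s hs hfin hprov

theorem exists_isMaxConsistent_superset (hTh : ¬LAEPCProv T Th (falsum T)) :
    ∃ Δ, Th ⊆ Δ ∧ IsMaxConsistent T Δ := by
  obtain ⟨Δ, hThΔ, hΔ⟩ := isOfFiniteCharacter_consistent.exists_maximal hTh
  refine ⟨Δ, hThΔ, hΔ.1, fun Ψ hΨ => .hyp ?_⟩
  by_contra hΨΔ
  have hins : LAEPCProv T (insert Ψ.not Δ) (falsum T) := by
    by_contra hcon
    exact hΨΔ (hΔ.eq_of_subset hcon (Set.subset_insert _ _) ▸ Set.mem_insert _ _)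
  exact hΨ (prov_of_prov_not_imp_falsum (prov_imp_of_prov_insert hins))

end Deduction

section MaxConsistent

variable {M : ℕ} {N : Fin M → ℕ} {K : ℕ} {T : FiniteTNorm} {Th Δ : Set (PFml M N K T.V)}

def Consistent (Th : Set (PFml M N K T.V)) (α : PExp M N K) : Prop :=
  ¬LAEPCProv T Th (.gi α T.one .bot)

lemma Consistent.of_gi {α β : PExp M N K} (hα : Consistent Th α)
    (h : LAEPCProv T Th (.gi α T.one β)) : Consistent Th β :=
  fun hβ => hα (gi_trans h hβ)

lemma Consistent.of_dle {φ : PExp M N K} (h : Consistent Th φ.dle) : Consistent Th φ :=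
  fun hφ => h (gi_trans (hφ.mp (.a17a _ _ T.one)) .a14a)

lemma Consistent.of_dge {φ : PExp M N K} (h : Consistent Th φ.dge) : Consistent Th φ :=
  fun hφ => h (gi_trans (hφ.mp (.a17b _ _ T.one)) .a14b)

theorem prov_and_iff {Φ Ψ : PFml M N K T.V} :
    LAEPCProv T Th (Φ.and Ψ) ↔ LAEPCProv T Th Φ ∧ LAEPCProv T Th Ψ :=
  ⟨fun h => ⟨prov_of_peval (fun g hg => by simp_all [PFml.peval]) h,
    prov_of_peval (fun g hg => by simp_all [PFml.peval]) h⟩, fun h => prov_and h.1 h.2⟩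

namespace IsMaxConsistent

theorem prov_not_iff (hΔ : IsMaxConsistent T Δ) {Ψ : PFml M N K T.V} :
    LAEPCProv T Δ Ψ.not ↔ ¬LAEPCProv T Δ Ψ :=
  ⟨fun h₁ h₂ => hΔ.consistent (prov_of_peval₂ (fun _ h₁ h₂ => by simp_all [PFml.peval]) h₁ h₂),
    hΔ.complete Ψ⟩

theorem prov_or_iff (hΔ : IsMaxConsistent T Δ) {Φ Ψ : PFml M N K T.V} :
    LAEPCProv T Δ (Φ.or Ψ) ↔ LAEPCProv T Δ Φ ∨ LAEPCProv T Δ Ψ := by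
  refine ⟨fun h => or_iff_not_imp_left.2 fun hΦ => ?_, fun h => h.elim ?_ ?_⟩
  · exact prov_of_peval₂ (fun g h₁ h₂ => by simp_all [PFml.peval]) h (hΔ.complete Φ hΦ)
  · exact prov_of_peval fun g hg => by simp [PFml.peval, hg]
  · exact prov_of_peval fun g hg => by simp [PFml.peval, hg]

theorem consistent_top (hΔ : IsMaxConsistent T Δ) : Consistent Δ (.top : PExp M N K) :=
  hΔ.consistent

theorem gi_or_gi_not (hΔ : IsMaxConsistent T Δ) {ε : PExp M N K} (hε : IsMecP ε)
    (φ : PExp M N K) :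
    LAEPCProv T Δ (.gi ε T.one φ) ∨ LAEPCProv T Δ (.gi ε T.one φ.not) :=
  hΔ.prov_or_iff.1 ((prov_gi_of_taut fun v _ => by
    cases h : φ.evalB v <;> simp [PExp.evalB, h]).mp (.a8 φ φ.not T.one hε))

theorem gi_of_consistent_and (hΔ : IsMaxConsistent T Δ) {ε φ : PExp M N K} (hε : IsMecP ε)
    (h : Consistent Δ (ε.and φ)) :
    LAEPCProv T Δ (.gi ε T.one φ) :=
  (hΔ.gi_or_gi_not hε φ).resolve_right fun hn => h (gi_and_bot_of_gi_not hn)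

theorem exists_gi_of_gi_disjListP (hΔ : IsMaxConsistent T Δ) {ε : PExp M N K}
    (hε : IsMecP ε) (hc : Consistent Δ ε) {c : T.V} {l : List (PExp M N K)}
    (h : LAEPCProv T Δ (.gi ε c (disjListP l))) :
    ∃ χ ∈ l, LAEPCProv T Δ (.gi ε c χ) := by
  induction l with
  | nil => exact absurd (h.mp (.a5 ε c)) hc
  | cons φ r ih =>
    rcases r with _ | ⟨ψ, s⟩
    · exact ⟨φ, List.mem_cons_self, h⟩
    · rw [disjListP_cons _ (List.cons_ne_nil _ _)] at h
      rcases hΔ.prov_or_iff.1 (h.mp (.a8 _ _ c hε)) with h | h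
      · exact ⟨φ, List.mem_cons_self, h⟩
      · obtain ⟨χ, hχ, hp⟩ := ih h
        exact ⟨χ, List.mem_cons_of_mem _ hχ, hp⟩

theorem gi_and_iff (hΔ : IsMaxConsistent T Δ) {φ ψ φ' ψ' : PExp M N K} {c : T.V}
    (hd : DisjointSorted (φ.and ψ) (φ'.and ψ')) (hc : Consistent Δ (φ.and φ')) :
    LAEPCProv T Δ (.gi (φ.and φ') c (ψ.and ψ')) ↔
      LAEPCProv T Δ (.gi φ c ψ) ∧ LAEPCProv T Δ (.gi φ' c ψ') := by
  have h := prov_and_iff.1 ((hΔ.complete _ hc).mp (.a20 c hd))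
  exact ⟨fun h' => prov_and_iff.1 (h'.mp h.2), fun h' => (prov_and h'.1 h'.2).mp h.1⟩

end IsMaxConsistent

def MergesSorts (Th : Set (PFml M N K T.V)) (α : PExp M N K) : Prop :=
  ∀ ⦃χ ψ : PExp M N K⦄, DisjointSorted χ ψ → Consistent Th (α.and χ) →
    Consistent Th (α.and ψ) → Consistent Th ((α.and χ).and ψ)

theorem IsMaxConsistent.mergesSorts_dle (hΔ : IsMaxConsistent T Δ) (φ : PExp M N K) :
    MergesSorts Δ φ.dle :=
  fun _ _ hd h₁ h₂ hP => (hΔ.prov_or_iff.1 (hP.mp (.a21b φ hd))).elim h₁ h₂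

theorem IsMaxConsistent.mergesSorts_dge (hΔ : IsMaxConsistent T Δ) (φ : PExp M N K) :
    MergesSorts Δ φ.dge :=
  fun _ _ hd h₁ h₂ hP => (hΔ.prov_or_iff.1 (hP.mp (.a21a φ hd))).elim h₁ h₂

theorem MergesSorts.consistent_and_sortConj {α : PExp M N K} (hα : MergesSorts Th α)
    (hα₀ : Consistent Th α) (g : Pattern M N) {l : List (Fin M)} (hl : l.Nodup)
    (h : ∀ i ∈ l, Consistent Th (α.and (sortMec K i (part g i)))) :
    Consistent Th (α.and (sortConj g l)) := by
  induction l with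
  | nil => exact hα₀.of_gi (gi_and (gi_refl α) (gi_top α))
  | cons i l ih =>
    rw [List.nodup_cons] at hl
    have merged := hα (disjointSorted_sortMec_sortConj hl.1 g) (h i List.mem_cons_self)
      (ih hl.2 fun j hj => h j (List.mem_cons_of_mem _ hj))
    refine merged.of_gi (gi_and (gi_trans (gi_and_left _ _) (gi_and_left _ _))
      (gi_trans ?_ (gi_sortConj_cons g i l)))
    exact gi_and (gi_trans (gi_and_left _ _) (gi_and_right _ _)) (gi_and_right _ _)

theorem MergesSorts.consistent_mec_and {α : PExp M N K} (hα : MergesSorts Th α)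
    (hα₀ : Consistent Th α) (g : Pattern M N)
    (h : ∀ i, Consistent Th ((sortMec K i (part g i)).and α)) :
    Consistent Th ((mec K g).and α) := by
  have hall := hα.consistent_and_sortConj hα₀ g (Finset.nodup_toList Finset.univ) fun i _ =>
    (h i).of_gi (gi_and (gi_and_right _ _) (gi_and_left _ _))
  exact hall.of_gi (gi_and (gi_trans (gi_and_right _ _) (sortConj_gi_mec g)) (gi_and_left _ _))

theorem IsMaxConsistent.consistent_mec (hΔ : IsMaxConsistent T Δ) (g : Pattern M N)
    (h : ∀ i, Consistent Δ (sortMec K i (part g i))) : Consistent Δ (mec K g) := by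
  have top_dge (φ : PExp M N K) : LAEPCProv T Δ (.gi φ T.one PExp.top.dge) :=
    gi_trans (gi_top φ) (.a12b _)
  have hall := (hΔ.mergesSorts_dge .top).consistent_mec_and
    (hΔ.consistent_top.of_gi (top_dge _)) g fun i => (h i).of_gi (gi_and (gi_refl _) (top_dge _))
  exact hall.of_gi (gi_and_left _ _)

theorem IsMaxConsistent.gi_sortConj_iff (hΔ : IsMaxConsistent T Δ) {g h : Pattern M N}
    {c : T.V} {l : List (Fin M)} (hl : l.Nodup) (hg : Consistent Δ (sortConj g l)) :
    LAEPCProv T Δ (.gi (sortConj g l) c (sortConj h l)) ↔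
      ∀ j ∈ l, LAEPCProv T Δ (.gi (sortMec K j (part g j)) c (sortMec K j (part h j))) := by
  induction l with
  | nil => exact iff_of_true (gi_of_le (coe_le_one c) (gi_refl _)) (by simp)
  | cons j l ih =>
    rw [List.nodup_cons] at hl
    have hc := hg.of_gi (sortConj_cons_gi g j l)
    have hd : DisjointSorted ((sortMec K j (part g j)).and (sortMec K j (part h j)))
        ((sortConj g l).and (sortConj h l)) :=
      (sortedIn_sortMec.and sortedIn_sortMec).disjointSorted
        ((sortedIn_sortConj g l).and (sortedIn_sortConj h l)) (Set.disjoint_singleton_left.2 hl.1)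
    rw [gi_iff_of_equiv (sortConj_cons_gi g j l) (gi_sortConj_cons g j l)
      (sortConj_cons_gi h j l) (gi_sortConj_cons h j l), hΔ.gi_and_iff hd hc,
      ih hl.2 (hc.of_gi (gi_and_right _ _)), List.forall_mem_cons]

/-- By (A20), one sort at a time. -/
theorem IsMaxConsistent.gi_mec_iff (hΔ : IsMaxConsistent T Δ) {g h : Pattern M N} {c : T.V}
    (hg : ∀ j, Consistent Δ (sortMec K j (part g j))) :
    LAEPCProv T Δ (.gi (mec K g) c (mec K h)) ↔
      ∀ j, LAEPCProv T Δ (.gi (sortMec K j (part g j)) c (sortMec K j (part h j))) := by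
  rw [gi_iff_of_equiv (mec_gi_sortConj g) (sortConj_gi_mec g) (mec_gi_sortConj h)
    (sortConj_gi_mec h), hΔ.gi_sortConj_iff (Finset.nodup_toList _)
      ((hΔ.consistent_mec g hg).of_gi (mec_gi_sortConj g))]
  simp

section SortOrder

variable {i : Fin M} {f f' : Fin (N i) → Bool}

theorem IsMaxConsistent.dle_total (hΔ : IsMaxConsistent T Δ) (f f' : Fin (N i) → Bool) :
    LAEPCProv T Δ (.gi (sortMec K i f).dle T.one (sortMec K i f').dle) ∨
      LAEPCProv T Δ (.gi (sortMec K i f').dle T.one (sortMec K i f).dle) :=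
  hΔ.prov_or_iff.1 (.a15a ⟨i, belongsTo_sortMec, belongsTo_sortMec⟩)

theorem IsMaxConsistent.dge_total (hΔ : IsMaxConsistent T Δ) (f f' : Fin (N i) → Bool) :
    LAEPCProv T Δ (.gi (sortMec K i f).dge T.one (sortMec K i f').dge) ∨
      LAEPCProv T Δ (.gi (sortMec K i f').dge T.one (sortMec K i f).dge) :=
  hΔ.prov_or_iff.1 (.a15b ⟨i, belongsTo_sortMec, belongsTo_sortMec⟩)

theorem eq_of_consistent_and (h : Consistent Th ((sortMec K i f).and (sortMec K i f'))) :
    f = f' :=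
  by_contra fun hne => h (sortMec_and_sortMec_gi_bot hne)

theorem gi_of_dle_of_dge
    (h₁ : LAEPCProv T Th (.gi (sortMec K i f).dle T.one (sortMec K i f').dle))
    (h₂ : LAEPCProv T Th (.gi (sortMec K i f).dge T.one (sortMec K i f').dge)) :
    LAEPCProv T Th (.gi (sortMec K i f) T.one (sortMec K i f')) :=
  gi_trans (gi_and (gi_trans (.a12a _) h₁) (gi_trans (.a12b _) h₂))
    (.a16 (isOneSortedMecP_sortMec i f'))

theorem eq_of_consistent_of_gi (hf : Consistent Th (sortMec K i f))
    (h : LAEPCProv T Th (.gi (sortMec K i f) T.one (sortMec K i f'))) : f = f' :=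
  eq_of_consistent_and (hf.of_gi (gi_and (gi_refl _) h))

theorem IsMaxConsistent.dge_of_dle (hΔ : IsMaxConsistent T Δ) (hf : Consistent Δ (sortMec K i f))
    (h : LAEPCProv T Δ (.gi (sortMec K i f).dle T.one (sortMec K i f').dle)) :
    LAEPCProv T Δ (.gi (sortMec K i f').dge T.one (sortMec K i f).dge) := by
  rcases hΔ.dge_total f' f with h' | h'
  · exact h'
  · obtain rfl := eq_of_consistent_of_gi hf (gi_of_dle_of_dge h h')
    exact gi_refl _

theorem IsMaxConsistent.dle_of_dge (hΔ : IsMaxConsistent T Δ)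
    (hf' : Consistent Δ (sortMec K i f'))
    (h : LAEPCProv T Δ (.gi (sortMec K i f').dge T.one (sortMec K i f).dge)) :
    LAEPCProv T Δ (.gi (sortMec K i f).dle T.one (sortMec K i f').dle) := by
  rcases hΔ.dle_total f f' with h' | h'
  · exact h'
  · obtain rfl := eq_of_consistent_of_gi hf' (gi_of_dle_of_dge h' h)
    exact gi_refl _

theorem IsMaxConsistent.dle_of_consistent (hΔ : IsMaxConsistent T Δ)
    (hc : Consistent Δ ((sortMec K i f).and (sortMec K i f').dle)) :
    LAEPCProv T Δ (.gi (sortMec K i f).dle T.one (sortMec K i f').dle) := by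
  rcases hΔ.dle_total f f' with h | h
  · exact h
  rcases hΔ.dge_total f f' with h' | h'
  · have hf' : LAEPCProv T Δ (.gi ((sortMec K i f).and (sortMec K i f').dle) T.one
        (sortMec K i f')) :=
      gi_trans (gi_and (gi_and_right _ _) (gi_trans (gi_and_left _ _) (gi_trans (.a12b _) h')))
        (.a16 (isOneSortedMecP_sortMec i f'))
    obtain rfl := eq_of_consistent_and (hc.of_gi (gi_and (gi_and_left _ _) hf'))
    exact gi_refl _
  · obtain rfl :=
      eq_of_consistent_of_gi (hc.of_gi (gi_and_right _ _)).of_dle (gi_of_dle_of_dge h h')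
    exact gi_refl _

theorem IsMaxConsistent.dge_of_consistent (hΔ : IsMaxConsistent T Δ)
    (hc : Consistent Δ ((sortMec K i f).and (sortMec K i f').dge)) :
    LAEPCProv T Δ (.gi (sortMec K i f).dge T.one (sortMec K i f').dge) := by
  rcases hΔ.dge_total f f' with h | h
  · exact h
  rcases hΔ.dle_total f f' with h' | h'
  · have hf' : LAEPCProv T Δ (.gi ((sortMec K i f).and (sortMec K i f').dge) T.one
        (sortMec K i f')) :=
      gi_trans (gi_and (gi_trans (gi_and_left _ _) (gi_trans (.a12a _) h')) (gi_and_right _ _))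
        (.a16 (isOneSortedMecP_sortMec i f'))
    obtain rfl := eq_of_consistent_and (hc.of_gi (gi_and (gi_and_left _ _) hf'))
    exact gi_refl _
  · obtain rfl :=
      eq_of_consistent_of_gi (hc.of_gi (gi_and_right _ _)).of_dge (gi_of_dle_of_dge h' h)
    exact gi_refl _

theorem Consistent.of_dge_and_dle {ψ : PExp M N K}
    (h : Consistent Th ((sortMec K i f).dge.and ψ.dle)) :
    Consistent Th ((sortMec K i f).and ψ.dle) :=
  fun hP => h (hP.mp (.a18a ψ ⟨i, belongsTo_sortMec⟩))

theorem Consistent.of_dle_and_dge {ψ : PExp M N K}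
    (h : Consistent Th ((sortMec K i f).dle.and ψ.dge)) :
    Consistent Th ((sortMec K i f).and ψ.dge) :=
  fun hP => h (hP.mp (.a18b ψ ⟨i, belongsTo_sortMec⟩))

theorem IsMaxConsistent.exists_consistent_sortMec (hΔ : IsMaxConsistent T Δ) (i : Fin M) :
    ∃ f : Fin (N i) → Bool, Consistent Δ (sortMec K i f) := by
  by_contra! hno
  refine hΔ.consistent (gi_trans (top_gi_disjListP_sortMec i) (gi_disjListP fun χ hχ => ?_))
  obtain ⟨f, -, rfl⟩ := List.mem_map.1 hχ
  exact of_not_not (hno f)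

end SortOrder

theorem IsMaxConsistent.gi_of_gi_dle_of_gi_dge (hΔ : IsMaxConsistent T Δ) {i : Fin M}
    {f : Fin (N i) → Bool} {φ : PExp M N K} {c : T.V} (hf : Consistent Δ (sortMec K i f))
    (h₁ : LAEPCProv T Δ (.gi φ c (sortMec K i f).dle))
    (h₂ : LAEPCProv T Δ (.gi φ c (sortMec K i f).dge)) :
    LAEPCProv T Δ (.gi φ c (sortMec K i f)) := by
  have hc := hΔ.complete _ (hf.of_gi (gi_and (.a12a _) (.a12b _)))
  exact gi_trans_right ((prov_and (prov_and hc h₁) h₂).mp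
    (.a19 φ c (isDiamondConjP_dle _) (isDiamondConjP_dge _))) (.a16 (isOneSortedMecP_sortMec i f))

end MaxConsistent

section CanonicalModel

variable {M : ℕ} {N : Fin M → ℕ} {K : ℕ} {T : FiniteTNorm} {Δ : Set (PFml M N K T.V)}

def CanonWorld (Δ : Set (PFml M N K T.V)) (i : Fin M) : Type :=
  {f : Fin (N i) → Bool // Consistent Δ (sortMec K i f)}

instance (i : Fin M) : Finite (CanonWorld Δ i) := Subtype.finite

noncomputable instance (i : Fin M) : Fintype (CanonWorld Δ i) := Fintype.ofFinite _

open Classical in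
noncomputable def grades {i : Fin M} (u x : CanonWorld Δ i) : Finset T.V :=
  letI : Fintype T.V := T.finite.fintype
  Finset.univ.filter fun c => LAEPCProv T Δ (.gi (sortMec K i u.1) c (sortMec K i x.1))

lemma mem_grades {i : Fin M} {u x : CanonWorld Δ i} {c : T.V} :
    c ∈ grades u x ↔ LAEPCProv T Δ (.gi (sortMec K i u.1) c (sortMec K i x.1)) := by
  simp [grades]

def canonPattern (w : ∀ i, CanonWorld Δ i) : Pattern M N := fun p => (w p.1).1 p.2

def canonE (Δ : Set (PFml M N K T.V)) (φ : PExp M N K) : Set (∀ i, CanonWorld Δ i) :=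
  {w | LAEPCProv T Δ (.gi (mec K (canonPattern w)) T.one φ)}

def canonWorldOfPattern (g : Pattern M N) (hg : Consistent Δ (mec K g)) : ∀ i, CanonWorld Δ i :=
  fun i => ⟨part g i, hg.of_gi (mec_gi_sortMec g i)⟩

lemma canonPattern_injective : Function.Injective (canonPattern (Δ := Δ)) :=
  fun _ _ h => funext fun i => Subtype.ext (funext fun j => congrFun h ⟨i, j⟩)

variable [hΔ : Fact (IsMaxConsistent T Δ)]

instance (i : Fin M) : Nonempty (CanonWorld Δ i) :=
  let ⟨f, hf⟩ := hΔ.out.exists_consistent_sortMec i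
  ⟨⟨f, hf⟩⟩

noncomputable instance (i : Fin M) : LinearOrder (CanonWorld Δ i) where
  le u x := LAEPCProv T Δ (.gi (sortMec K i u.1).dle T.one (sortMec K i x.1).dle)
  le_refl _ := gi_refl _
  le_trans _ _ _ := gi_trans
  le_antisymm u x h₁ h₂ :=
    Subtype.ext (eq_of_consistent_of_gi u.2 (gi_of_dle_of_dge h₁ (hΔ.out.dge_of_dle x.2 h₂)))
  le_total u x := hΔ.out.dle_total u.1 x.1
  toDecidableLE := Classical.decRel _

lemma CanonWorld.dge_of_le {i : Fin M} {u x : CanonWorld Δ i} (h : u ≤ x) :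
    LAEPCProv T Δ (.gi (sortMec K i x.1).dge T.one (sortMec K i u.1).dge) :=
  hΔ.out.dge_of_dle u.2 h

/-- The largest `c` with `ε_u ⤳_c ε_x`; such grades exist, `0` being one by (A4). -/
noncomputable def canonS {i : Fin M} (u x : CanonWorld Δ i) : T.V :=
  (grades u x).max' ⟨T.zero, mem_grades.2 ((hΔ.out.complete _ x.2).mp (.a4 _ _))⟩

lemma le_canonS_iff {i : Fin M} {u x : CanonWorld Δ i} {c : T.V} :
    (c : ℝ) ≤ canonS u x ↔ LAEPCProv T Δ (.gi (sortMec K i u.1) c (sortMec K i x.1)) := by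
  rw [Subtype.coe_le_coe]
  exact ⟨fun h => gi_of_le h (mem_grades.1 (Finset.max'_mem _ _)),
    fun h => Finset.le_max' _ c (mem_grades.2 h)⟩

lemma gi_canonS {i : Fin M} (u x : CanonWorld Δ i) :
    LAEPCProv T Δ (.gi (sortMec K i u.1) (canonS u x) (sortMec K i x.1)) :=
  le_canonS_iff.1 le_rfl

lemma gi_mec_canonPattern_iff {w w' : ∀ i, CanonWorld Δ i} {c : T.V} :
    LAEPCProv T Δ (.gi (mec K (canonPattern w)) c (mec K (canonPattern w'))) ↔
      ∀ i, LAEPCProv T Δ (.gi (sortMec K i (w i).1) c (sortMec K i (w' i).1)) :=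
  hΔ.out.gi_mec_iff fun i => (w i).2

lemma consistent_mec_canonPattern (w : ∀ i, CanonWorld Δ i) :
    Consistent Δ (mec K (canonPattern w)) :=
  hΔ.out.consistent_mec _ fun i => (w i).2

/-- Symmetry is inherited from (A6), applied to m.e.c.s agreeing outside the sort `i`. -/
lemma CanonWorld.gi_symm {i : Fin M} {u x : CanonWorld Δ i} {c : T.V}
    (h : LAEPCProv T Δ (.gi (sortMec K i u.1) c (sortMec K i x.1))) :
    LAEPCProv T Δ (.gi (sortMec K i x.1) c (sortMec K i u.1)) := by
  let w₀ : ∀ j, CanonWorld Δ j := fun _ => Classical.arbitrary _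
  have hux : LAEPCProv T Δ (.gi (mec K (canonPattern (Function.update w₀ i u))) c
      (mec K (canonPattern (Function.update w₀ i x)))) := by
    refine gi_mec_canonPattern_iff.2 fun j => ?_
    rcases eq_or_ne j i with rfl | hj
    · simpa using h
    · simpa [Function.update_of_ne hj] using gi_of_le (coe_le_one c) (gi_refl _)
  have hxu := (prov_and (hΔ.out.complete _ (consistent_mec_canonPattern _)) hux).mp
    (.a6 c (isMecP_mec _) (isMecP_mec _))
  simpa using gi_mec_canonPattern_iff.1 hxu i

lemma canonS_le_min {i : Fin M} {u v w : CanonWorld Δ i} (huv : u ≤ v) (hvw : v ≤ w) :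
    (canonS u w : ℝ) ≤ min (canonS u v : ℝ) (canonS v w) := by
  have huw := gi_canonS u w
  have hdge := CanonWorld.dge_of_le huv
  refine le_min (le_canonS_iff.2 (CanonWorld.gi_symm ?_)) (le_canonS_iff.2 ?_)
  · refine hΔ.out.gi_of_gi_dle_of_gi_dge u.2
      (gi_trans_left (gi_trans (.a12a _) hvw) ((CanonWorld.gi_symm huw).mp (.a17a _ _ _)))
      (gi_of_le (coe_le_one _) (gi_trans (.a12b _) hdge))
  · exact hΔ.out.gi_of_gi_dle_of_gi_dge w.2 (gi_of_le (coe_le_one _) (gi_trans (.a12a _) hvw))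
      (gi_trans_left (gi_trans (.a12b _) hdge) (huw.mp (.a17b _ _ _)))

noncomputable def canonSpace (i : Fin M) : TOSimilaritySpace T (CanonWorld Δ i) where
  S := canonS
  eq_one_iff u x := by
    refine ⟨fun h => Subtype.ext (eq_of_consistent_of_gi u.2 (le_canonS_iff.1 (h ▸ le_rfl))),
      fun h => ?_⟩
    subst h
    exact Subtype.ext (le_antisymm (coe_le_one _) (le_canonS_iff.2 (gi_refl _)))
  symm u x := Subtype.ext (le_antisymm (le_canonS_iff.2 (CanonWorld.gi_symm (gi_canonS u x)))
    (le_canonS_iff.2 (CanonWorld.gi_symm (gi_canonS x u))))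
  triangle u v w := le_canonS_iff.2 ((prov_and (gi_canonS u v) (gi_canonS v w)).mp (.a9 _ _ _ _ _))
  compat _ _ _ := canonS_le_min

lemma mem_canonE_not {φ : PExp M N K} {w : ∀ i, CanonWorld Δ i} :
    w ∈ canonE Δ φ.not ↔ w ∉ canonE Δ φ :=
  ⟨fun hn h => consistent_mec_canonPattern w (gi_and_bot_of_gi_not hn |> gi_trans (gi_and
    (gi_refl _) h)), fun h => (hΔ.out.gi_or_gi_not (isMecP_mec _) φ).resolve_left h⟩

lemma mem_canonE_svar {w : ∀ i, CanonWorld Δ i} {i : Fin M} {j : Fin (N i)} :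
    w ∈ canonE Δ (.svar i j) ↔ (w i).1 j = true := by
  have hlit (b : Bool) (hb : (w i).1 j = b) :
      w ∈ canonE Δ (PExp.sliteral ⟨i, j⟩ b) :=
    prov_gi_of_taut fun v hv => (evalB_sliteral v ⟨i, j⟩ b).2
      (((evalB_mec v _).1 hv ⟨i, j⟩).trans hb)
  refine ⟨fun h => ?_, hlit true⟩
  by_contra hj
  exact mem_canonE_not.1 (hlit false (Bool.eq_false_iff.2 hj)) h

open Classical in
theorem gi_disjListP_canonE (φ : PExp M N K) :
    LAEPCProv T Δ (.gi φ T.one (disjListP ((Finset.univ.filter (· ∈ canonE Δ φ)).toList.map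
      fun w => mec K (canonPattern w)))) := by
  have hcover : LAEPCProv T Δ (.gi φ T.one
      (disjListP ((Finset.univ : Finset (Pattern M N)).toList.map fun g => (mec K g).and φ))) :=
    prov_gi_of_taut fun v hv => by
      rw [evalB_disjListP, List.any_eq_true]
      exact ⟨_, List.mem_map_of_mem (Finset.mem_toList.2 (Finset.mem_univ fun p =>
        v (.svar p.1 p.2))), by simp [PExp.evalB, evalB_mec, hv]⟩
  refine gi_trans hcover (gi_disjListP fun χ hχ => ?_)
  obtain ⟨g, -, rfl⟩ := List.mem_map.1 hχ
  by_cases hg : Consistent Δ ((mec K g).and φ)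
  · have hw : canonWorldOfPattern g (hg.of_gi (gi_and_left _ _)) ∈ canonE Δ φ :=
      hΔ.out.gi_of_consistent_and (isMecP_mec g) hg
    exact gi_trans (gi_and_left _ _)
      (gi_disjListP_of_mem (List.mem_map.2 ⟨_, by simpa using hw, rfl⟩))
  · exact gi_of_gi_bot (of_not_not hg)

open Classical in
lemma not_consistent_of_canonE_eq_empty {φ : PExp M N K}
    (h : Finset.univ.filter (· ∈ canonE Δ φ) = ∅) : ¬Consistent Δ φ := fun hφ =>
  hφ (gi_trans (gi_disjListP_canonE φ) (by simp [h, disjListP, gi_refl]))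

lemma canonE_eq_empty_of_not_consistent {φ : PExp M N K} (h : ¬Consistent Δ φ) :
    canonE Δ φ = ∅ :=
  Set.eq_empty_of_forall_notMem fun w hw =>
    consistent_mec_canonPattern w (gi_trans hw (of_not_not h))

open Classical in
lemma canonE_dle_subset (φ : PExp M N K) : canonE Δ φ.dle ⊆ pDcl (canonE Δ φ) := by
  intro w hw i
  set s := Finset.univ.filter (· ∈ canonE Δ φ)
  rcases s.eq_empty_or_nonempty with hs | hs
  · have := canonE_eq_empty_of_not_consistent fun h =>
      not_consistent_of_canonE_eq_empty hs h.of_dle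
    exact absurd (this ▸ hw) (Set.notMem_empty w)
  obtain ⟨v, hv, hmax⟩ := s.exists_max_image (· i) hs
  refine ⟨v, (Finset.mem_filter.1 hv).2, ?_⟩
  have hdisj : LAEPCProv T Δ (.gi (disjListP (s.toList.map fun w => mec K (canonPattern w))) T.one
      (sortMec K i (v i).1).dle) := gi_disjListP fun χ hχ => by
    obtain ⟨v', hv', rfl⟩ := List.mem_map.1 hχ
    exact gi_trans (mec_gi_sortMec _ i) (gi_trans (.a12a _) (hmax v' (Finset.mem_toList.1 hv')))
  have hφ : LAEPCProv T Δ (.gi φ.dle T.one (sortMec K i (v i).1).dle) :=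
    gi_trans ((gi_trans (gi_disjListP_canonE φ) hdisj).mp (.a17a _ _ _)) (.a13a _)
  exact hΔ.out.dle_of_consistent ((consistent_mec_canonPattern w).of_gi
    (gi_and (mec_gi_sortMec _ i) (gi_trans hw hφ)))

open Classical in
lemma canonE_dge_subset (φ : PExp M N K) : canonE Δ φ.dge ⊆ pUcl (canonE Δ φ) := by
  intro w hw i
  set s := Finset.univ.filter (· ∈ canonE Δ φ)
  rcases s.eq_empty_or_nonempty with hs | hs
  · have := canonE_eq_empty_of_not_consistent fun h =>
      not_consistent_of_canonE_eq_empty hs h.of_dge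
    exact absurd (this ▸ hw) (Set.notMem_empty w)
  obtain ⟨v, hv, hmin⟩ := s.exists_min_image (· i) hs
  refine ⟨v, (Finset.mem_filter.1 hv).2, ?_⟩
  have hdisj : LAEPCProv T Δ (.gi (disjListP (s.toList.map fun w => mec K (canonPattern w))) T.one
      (sortMec K i (v i).1).dge) := gi_disjListP fun χ hχ => by
    obtain ⟨v', hv', rfl⟩ := List.mem_map.1 hχ
    exact gi_trans (mec_gi_sortMec _ i)
      (gi_trans (.a12b _) (CanonWorld.dge_of_le (hmin v' (Finset.mem_toList.1 hv'))))
  have hφ : LAEPCProv T Δ (.gi φ.dge T.one (sortMec K i (v i).1).dge) :=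
    gi_trans ((gi_trans (gi_disjListP_canonE φ) hdisj).mp (.a17b _ _ _)) (.a13b _)
  exact hΔ.out.dle_of_dge (w i).2 (hΔ.out.dge_of_consistent ((consistent_mec_canonPattern w).of_gi
    (gi_and (mec_gi_sortMec _ i) (gi_trans hw hφ))))

lemma pDcl_canonE_subset (hM : 0 < M) (φ : PExp M N K) :
    pDcl (canonE Δ φ) ⊆ canonE Δ φ.dle := by
  intro w hw
  have hparts (i : Fin M) : Consistent Δ ((sortMec K i (w i).1).and φ.dle) := by
    obtain ⟨v, hv, hwv⟩ := hw i
    refine Consistent.of_dge_and_dle ((consistent_mec_canonPattern v).of_gi (gi_and ?_ ?_))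
    · exact gi_trans (mec_gi_sortMec _ i) (gi_trans (.a12b _) (CanonWorld.dge_of_le hwv))
    · exact gi_trans hv (.a12a _)
  exact hΔ.out.gi_of_consistent_and (isMecP_mec _) ((hΔ.out.mergesSorts_dle φ).consistent_mec_and
    ((hparts ⟨0, hM⟩).of_gi (gi_and_right _ _)) _ hparts)

lemma pUcl_canonE_subset (hM : 0 < M) (φ : PExp M N K) :
    pUcl (canonE Δ φ) ⊆ canonE Δ φ.dge := by
  intro w hw
  have hparts (i : Fin M) : Consistent Δ ((sortMec K i (w i).1).and φ.dge) := by
    obtain ⟨v, hv, hvw⟩ := hw i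
    refine Consistent.of_dle_and_dge ((consistent_mec_canonPattern v).of_gi (gi_and ?_ ?_))
    · exact gi_trans (mec_gi_sortMec _ i) (gi_trans (.a12a _) hvw)
    · exact gi_trans hv (.a12b _)
  exact hΔ.out.gi_of_consistent_and (isMecP_mec _) ((hΔ.out.mergesSorts_dge φ).consistent_mec_and
    ((hparts ⟨0, hM⟩).of_gi (gi_and_right _ _)) _ hparts)

lemma mem_iInter_literals_iff (g : Pattern M N) (w : ∀ i, CanonWorld Δ i) :
    w ∈ (⋂ p : (i : Fin M) × Fin (N i),
      if g p then canonE Δ (.svar p.1 p.2) else (canonE Δ (.svar p.1 p.2))ᶜ) ↔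
      canonPattern w = g := by
  simp only [Set.mem_iInter, funext_iff]
  refine forall_congr' fun p => ?_
  split <;> simp_all [mem_canonE_svar, canonPattern]

noncomputable def canonEval (hM : 0 < M) : LAEPCEval M N K (CanonWorld Δ) where
  e := canonE Δ
  map_bot := canonE_eq_empty_of_not_consistent fun h => h (gi_refl _)
  map_top := Set.eq_univ_of_forall fun _ => gi_top _
  map_and φ ψ := Set.ext fun _ =>
    ⟨fun h => ⟨gi_trans h (gi_and_left _ _), gi_trans h (gi_and_right _ _)⟩,
      fun h => gi_and h.1 h.2⟩
  map_or φ ψ := Set.ext fun w =>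
    ⟨fun h => hΔ.out.prov_or_iff.1 (h.mp (.a8 φ ψ T.one (isMecP_mec _))),
      fun h => h.elim (fun h => gi_trans h (gi_disjListP_of_mem (l := [φ, ψ]) (by simp)))
        (fun h => gi_trans h (gi_disjListP_of_mem (l := [φ, ψ]) (by simp)))⟩
  map_not _ := Set.ext fun _ => mem_canonE_not
  map_dle φ := (canonE_dle_subset φ).antisymm (pDcl_canonE_subset hM φ)
  map_dge φ := (canonE_dge_subset φ).antisymm (pUcl_canonE_subset hM φ)
  svar_cyl i j := ⟨{u | u.1 j = true}, Set.ext fun _ => mem_canonE_svar⟩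
  uvar_alg k := ⟨canonPattern '' canonE Δ (.uvar k), Set.ext fun w => by
    simp only [Set.mem_iUnion, mem_iInter_literals_iff, exists_prop, Set.mem_image]
    exact ⟨fun h => ⟨_, ⟨w, h, rfl⟩, rfl⟩, fun ⟨_, ⟨v, hv, hvg⟩, hwg⟩ =>
      canonPattern_injective (hvg.trans hwg.symm) ▸ hv⟩⟩
  separating v w hvw := by
    obtain ⟨i, hi⟩ := Function.ne_iff.1 hvw
    obtain ⟨j, hj⟩ := Function.ne_iff.1 (Subtype.coe_ne_coe.2 hi)
    refine .inl ⟨i, j, (xor_iff_not_iff _ _).2 ?_⟩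
    simp only [mem_canonE_svar]
    cases hv : (v i).1 j <;> cases hw : (w i).1 j <;> simp_all

open Classical in
theorem canonE_subset_pNbhd_iff (hM : 0 < M) {φ ψ : PExp M N K} {c : T.V} :
    canonE Δ φ ⊆ pNbhd hM canonSpace c (canonE Δ ψ) ↔ LAEPCProv T Δ (.gi φ c ψ) := by
  have hclose {w a : ∀ i, CanonWorld Δ i} : (c : ℝ) ≤ prodS hM canonSpace w a ↔
      LAEPCProv T Δ (.gi (mec K (canonPattern w)) c (mec K (canonPattern a))) := by
    rw [le_prodS_iff, gi_mec_canonPattern_iff]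
    exact forall_congr' fun i => le_canonS_iff
  constructor
  · refine fun h => gi_trans_left (gi_disjListP_canonE φ) (gi_disjListP fun χ hχ => ?_)
    obtain ⟨w, hw, rfl⟩ := List.mem_map.1 hχ
    obtain ⟨a, ha, hwa⟩ := h (Finset.mem_filter.1 (Finset.mem_toList.1 hw)).2
    exact gi_trans_right (hclose.1 hwa) ha
  · intro h w hw
    obtain ⟨χ, hχ, hwχ⟩ := hΔ.out.exists_gi_of_gi_disjListP (isMecP_mec _)
      (consistent_mec_canonPattern w) (gi_trans_right (gi_trans_left hw h) (gi_disjListP_canonE ψ))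
    obtain ⟨a, ha, rfl⟩ := List.mem_map.1 hχ
    exact ⟨a, (Finset.mem_filter.1 (Finset.mem_toList.1 ha)).2, hclose.2 hwχ⟩

theorem sat_canonEval_iff (hM : 0 < M) (Ψ : PFml M N K T.V) :
    LAEPCSat hM (canonSpace (Δ := Δ)) (canonEval hM) Ψ ↔ LAEPCProv T Δ Ψ := by
  induction Ψ with
  | gi φ c ψ => exact canonE_subset_pNbhd_iff hM
  | and _ _ ih₁ ih₂ => exact (and_congr ih₁ ih₂).trans prov_and_iff.symm
  | or _ _ ih₁ ih₂ => exact (or_congr ih₁ ih₂).trans hΔ.out.prov_or_iff.symm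
  | not _ ih => exact (not_congr ih).trans hΔ.out.prov_not_iff.symm

end CanonicalModel

theorem prov_of_entails {M : ℕ} {N : Fin M → ℕ} {K : ℕ} {T : FiniteTNorm} (hM : 0 < M)
    {Th : Set (PFml M N K T.V)} {Φ : PFml M N K T.V}
    (h : LAEPCEntails hM T Th Φ) : LAEPCProv T Th Φ := by
  by_contra hΦ
  obtain ⟨Δ, hThΔ, hΔ⟩ := exists_isMaxConsistent_superset (Th := insert Φ.not Th) fun h' =>
    hΦ (prov_of_prov_not_imp_falsum (prov_imp_of_prov_insert h'))
  have : Fact (IsMaxConsistent T Δ) := ⟨hΔ⟩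
  have hsat := h (CanonWorld Δ) canonSpace (canonEval hM) fun Ψ hΨ =>
    (sat_canonEval_iff (Δ := Δ) hM Ψ).2 (.hyp (hThΔ (Set.mem_insert_of_mem _ hΨ)))
  exact hΔ.prov_not_iff.1 (.hyp (hThΔ (Set.mem_insert _ _)))
    ((sat_canonEval_iff (Δ := Δ) hM Φ).1 hsat)

end LAEPC

/-- Soundness and completeness of the Logic of Approximate Entailment on
Products of Chains: `T ⊢_LAEPC Φ` iff `T ⊨_LAEPC Φ`. -/
theorem LAEPC_soundness_and_completeness {M : ℕ} {N : Fin M → ℕ} {K : ℕ} (hM : 0 < M)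
    (T : FiniteTNorm) (Th : Set (PFml M N K T.V)) (Φ : PFml M N K T.V) :
    LAEPCProv T Th Φ ↔ LAEPCEntails hM T Th Φ :=
  ⟨fun h _ _ _ _ sps ev hTh => LAEPC.sat_of_prov hM sps ev hTh h, LAEPC.prov_of_entails hM⟩
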